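/- arXiv:0711.4649 — 9 statements merged into one kernel-verified Lean document; each statement's English description precedes it below -/
import Mathlib

section
/- If r_0 > B-1 then r_n tends to infinity and the limit of 2^{-n} log r_n exists and is a positive real number. -/
open Filter Topology

/-- If `r 0 > B - 1` then `r n → ∞` and `2^{-n} log (r n)` converges to a positive limit. -/
theorem stmt2 (B : ℝ) (hB : 2 < B) (r : ℕ → ℝ) (hr0 : B - 1 < r 0)
    (hrec : ∀ n, r (n + 1) = (r n ^ 2 + (B - 1)) / B) :
    Tendsto r atTop atTop ∧
    ∃ L : ℝ, 0 < L ∧ Tendsto (fun n => Real.log (r n) / 2 ^ n) atTop (𝓝 L) := by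
  have hBpos : (0:ℝ) < B := by linarith
  -- r n > B - 1 for all n
  have hgt : ∀ n, B - 1 < r n := by
    intro n
    induction n with
    | zero => exact hr0
    | succ k ih =>
      rw [hrec k, lt_div_iff₀ hBpos]
      nlinarith
  have hr1 : ∀ n, 1 < r n := fun n => by have := hgt n; linarith
  have hrpos : ∀ n, 0 < r n := fun n => lt_trans one_pos (hr1 n)
  -- linear growth
  set δ : ℝ := (r 0 - 1) * (r 0 - (B - 1)) / B with hδ
  have hδpos : 0 < δ := by
    apply div_pos _ hBpos
    have := hr1 0
    nlinarith
  have hlin : ∀ n, r 0 + n * δ ≤ r n := by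
    intro n
    induction n with
    | zero => simp
    | succ k ih =>
      have hk : r 0 ≤ r k := le_trans (by nlinarith [hδpos]) ih
      have step : r k + δ ≤ r (k + 1) := by
        rw [hrec k, hδ, le_div_iff₀ hBpos, add_mul,
          div_mul_cancel₀ _ (ne_of_gt hBpos)]
        nlinarith [mul_le_mul (by linarith : r 0 - 1 ≤ r k - 1)
          (by linarith : r 0 - (B - 1) ≤ r k - (B - 1))
          (by linarith : (0:ℝ) ≤ r 0 - (B - 1))
          (by linarith [hr1 k] : (0:ℝ) ≤ r k - 1)]
      push_cast
      nlinarith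
  have htop : Tendsto r atTop atTop := by
    apply tendsto_atTop_mono hlin
    apply tendsto_atTop_add_const_left
    exact (tendsto_natCast_atTop_atTop).atTop_mul_const hδpos
  refine ⟨htop, ?_⟩
  set a : ℕ → ℝ := fun n => Real.log (r n) / 2 ^ n with ha
  set b : ℕ → ℝ := fun n => (Real.log (r n) - Real.log B) / 2 ^ n with hb
  have h2pos : ∀ n : ℕ, (0:ℝ) < 2 ^ n := fun n => by positivity
  -- key log inequalities
  have hlog_up : ∀ n, Real.log (r (n+1)) ≤ 2 * Real.log (r n) := by
    intro n
    have hle : r (n+1) ≤ r n ^ 2 := by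
      rw [hrec n, div_le_iff₀ hBpos]
      have h1 : 1 < r n ^ 2 := by nlinarith [hr1 n]
      nlinarith [mul_nonneg (by linarith : (0:ℝ) ≤ B - 1) (by linarith : (0:ℝ) ≤ r n ^ 2 - 1)]
    calc Real.log (r (n+1)) ≤ Real.log (r n ^ 2) :=
          Real.log_le_log (hrpos _) hle
      _ = 2 * Real.log (r n) := by
          rw [Real.log_pow]; push_cast; ring
  have hlog_lo : ∀ n, 2 * Real.log (r n) - Real.log B ≤ Real.log (r (n+1)) := by
    intro n
    have hle : r n ^ 2 / B ≤ r (n+1) := by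
      rw [hrec n, div_le_div_iff₀ hBpos hBpos]
      nlinarith
    have := Real.log_le_log (div_pos (pow_pos (hrpos n) 2) hBpos) hle
    rw [Real.log_div (ne_of_gt (pow_pos (hrpos n) 2)) (ne_of_gt hBpos),
      Real.log_pow] at this
    push_cast at this
    linarith
  have ha_anti : Antitone a := by
    apply antitone_nat_of_succ_le
    intro n
    have := hlog_up n
    rw [ha]
    simp only
    rw [div_le_div_iff₀ (h2pos (n+1)) (h2pos n), pow_succ]
    nlinarith [h2pos n]
  have hb_mono : Monotone b := by
    apply monotone_nat_of_le_succ
    intro n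
    have := hlog_lo n
    rw [hb]
    simp only
    rw [div_le_div_iff₀ (h2pos n) (h2pos (n+1)), pow_succ]
    nlinarith [h2pos n]
  have hlogB : 0 < Real.log B := Real.log_pos (by linarith)
  have hba : ∀ n, b n ≤ a n := by
    intro n
    rw [hb, ha]
    simp only
    rw [div_le_div_iff₀ (h2pos n) (h2pos n)]
    nlinarith [h2pos n, hlogB]
  have hba' : ∀ n, b n ≤ a n := hba
  have hbdd : BddBelow (Set.range a) := by
    refine ⟨b 0, ?_⟩
    rintro x ⟨n, rfl⟩
    exact le_trans (hb_mono (Nat.zero_le n)) (hba n)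
  have ha_tends : Tendsto a atTop (𝓝 (⨅ n, a n)) :=
    tendsto_atTop_ciInf ha_anti hbdd
  set L := ⨅ n, a n with hL
  -- a - b → 0
  have hdiff : Tendsto (fun n : ℕ => Real.log B / 2 ^ n) atTop (𝓝 0) := by
    have h := tendsto_pow_atTop_nhds_zero_of_lt_one
      (by norm_num : (0:ℝ) ≤ 1/2) (by norm_num : (1/2:ℝ) < 1)
    have h2 := h.const_mul (Real.log B)
    simp only [mul_zero] at h2
    have heq : (fun n : ℕ => Real.log B / 2 ^ n)
        = fun n : ℕ => Real.log B * (1/2:ℝ) ^ n := by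
      funext n
      rw [div_pow, one_pow]
      ring
    rw [heq]
    exact h2
  have hb_tends : Tendsto b atTop (𝓝 L) := by
    have : b = fun n => a n - Real.log B / 2 ^ n := by
      funext n
      rw [hb, ha]
      simp only
      ring
    rw [this]
    have := ha_tends.sub hdiff
    simpa using this
  refine ⟨L, ?_, ha_tends⟩
  -- positivity: find N with r N > B
  obtain ⟨N, hN⟩ := (tendsto_atTop.mp htop (B + 1)).exists
  have hbN : 0 < b N := by
    rw [hb]
    apply div_pos _ (h2pos N)
    have : Real.log B < Real.log (r N) := Real.log_lt_log hBpos (by linarith)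
    linarith
  have : b N ≤ L := by
    apply ge_of_tendsto hb_tends
    filter_upwards [eventually_ge_atTop N] with m hm
    exact hb_mono hm
  linarith
end

section
/- Let A_n := E[([R_n - 1]^+)^γ] where R_{n+1} = (R_n^{(1)} R_n^{(2)} + (B-1))/B with R_n^{(1)}, R_n^{(2)} independent copies of R_n ≥ 0. Then A_{n+1} ≤ (A_n^2 + 2A_n)/B^γ for every γ ∈ (0,1]. -/
/-!
Write `a⁺ = max (a - 1) 0`. The recursion map `r ↦ (r + (B - 1)) / B` fixes `1` and divides the
distance to `1` by `B`, so the new moment is `E[((R₁R₂)⁺)^γ] / B^γ`. For `s ≥ 0` one has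
`s t - 1 ≤ s⁺ t⁺ + s⁺ + t⁺`, and since `x ↦ x^γ` is subadditive for `γ ≤ 1`,
`((R₁R₂)⁺)^γ ≤ (R₁⁺)^γ (R₂⁺)^γ + (R₁⁺)^γ + (R₂⁺)^γ`. Taking expectations, independence turns the
product term into `A²` and equality in distribution turns each of the other two into `A`.
-/

open MeasureTheory ProbabilityTheory

/-- The paper's `([r - 1]^+)^γ`. -/
noncomputable def excessPow (γ r : ℝ) : ℝ := max (r - 1) 0 ^ γ

lemma excessPow_nonneg (γ r : ℝ) : 0 ≤ excessPow γ r :=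
  Real.rpow_nonneg (le_max_right _ _) γ

lemma measurable_excessPow (γ : ℝ) : Measurable (excessPow γ) := by
  unfold excessPow
  fun_prop

lemma max_mul_sub_one_le {s t : ℝ} (hs : 0 ≤ s) :
    max (s * t - 1) 0 ≤ max (s - 1) 0 * max (t - 1) 0 + max (s - 1) 0 + max (t - 1) 0 := by
  have ha := le_max_left (s - 1) 0
  have ha0 := le_max_right (s - 1) 0
  have hb := le_max_left (t - 1) 0
  have hb0 := le_max_right (t - 1) 0
  refine max_le ?_ (by positivity)
  nlinarith [mul_le_mul_of_nonneg_left (show t ≤ 1 + max (t - 1) 0 by linarith) hs]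

lemma excessPow_mul_le {γ s t : ℝ} (hγ0 : 0 ≤ γ) (hγ1 : γ ≤ 1) (hs : 0 ≤ s) :
    excessPow γ (s * t) ≤
      excessPow γ s * excessPow γ t + excessPow γ s + excessPow γ t := by
  unfold excessPow
  set a := max (s - 1) 0
  set b := max (t - 1) 0
  have ha : 0 ≤ a := le_max_right _ _
  have hb : 0 ≤ b := le_max_right _ _
  calc max (s * t - 1) 0 ^ γ ≤ (a * b + a + b) ^ γ :=
        Real.rpow_le_rpow (le_max_right _ _) (max_mul_sub_one_le hs) hγ0
    _ ≤ (a * b + a) ^ γ + b ^ γ := Real.rpow_add_le_add_rpow (by positivity) hb hγ0 hγ1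
    _ ≤ (a * b) ^ γ + a ^ γ + b ^ γ := by
        gcongr
        exact Real.rpow_add_le_add_rpow (by positivity) ha hγ0 hγ1
    _ = a ^ γ * b ^ γ + a ^ γ + b ^ γ := by rw [Real.mul_rpow ha hb]

lemma excessPow_add_sub_one_div {γ B : ℝ} (hB : 0 < B) (r : ℝ) :
    excessPow γ ((r + (B - 1)) / B) = excessPow γ r / B ^ γ := by
  unfold excessPow
  have hshift : (r + (B - 1)) / B - 1 = (r - 1) / B := by field_simp; ring
  have hmax : max ((r - 1) / B) 0 = max (r - 1) 0 / B := by
    rw [← max_div_div_right hB.le, zero_div]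
  rw [hshift, hmax, Real.div_rpow (le_max_right _ _) hB.le]

lemma integral_mul_add_add_of_indepFun_of_identDistrib {Ω : Type*} [MeasurableSpace Ω]
    {μ : Measure Ω} {f g : Ω → ℝ} (hind : IndepFun f g μ) (hid : IdentDistrib f g μ μ)
    (hf : Integrable f μ) :
    ∫ x, (f x * g x + f x + g x) ∂μ = (∫ x, f x ∂μ) ^ 2 + 2 * ∫ x, f x ∂μ := by
  have hg : Integrable g μ := hid.integrable_snd hf
  have hfg : Integrable (fun x => f x * g x) μ := hind.integrable_mul hf hg
  rw [integral_add (f := fun x => f x * g x + f x) (hfg.add hf) hg, integral_add hfg hf,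
    hind.integral_fun_mul_eq_mul_integral hf.1 hg.1, ← hid.integral_eq]
  ring

theorem stmt6_general {Ω : Type*} [MeasurableSpace Ω] (μ : Measure Ω)
    (B γ : ℝ) (hB : 2 < B) (hγ : γ ∈ Set.Ioc (0 : ℝ) 1)
    (R1 R2 : Ω → ℝ) (hind : IndepFun R1 R2 μ) (hid : IdentDistrib R1 R2 μ μ)
    (hpos1 : ∀ x, 0 ≤ R1 x)
    (hint1 : Integrable (fun x => max (R1 x - 1) 0 ^ γ) μ) :
    ∫ x, max ((R1 x * R2 x + (B - 1)) / B - 1) 0 ^ γ ∂μ ≤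
      ((∫ x, max (R1 x - 1) 0 ^ γ ∂μ) ^ 2 + 2 * ∫ x, max (R1 x - 1) 0 ^ γ ∂μ) / B ^ γ := by
  obtain ⟨hγ0, hγ1⟩ := hγ
  change ∫ x, excessPow γ ((R1 x * R2 x + (B - 1)) / B) ∂μ ≤
    ((∫ x, excessPow γ (R1 x) ∂μ) ^ 2 + 2 * ∫ x, excessPow γ (R1 x) ∂μ) / B ^ γ
  have hindφ : IndepFun (excessPow γ ∘ R1) (excessPow γ ∘ R2) μ :=
    hind.comp (measurable_excessPow γ) (measurable_excessPow γ)
  have hidφ : IdentDistrib (excessPow γ ∘ R1) (excessPow γ ∘ R2) μ μ :=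
    hid.comp (measurable_excessPow γ)
  have hint2 := hidφ.integrable_snd hint1
  simp_rw [excessPow_add_sub_one_div (show 0 < B by linarith), integral_div]
  gcongr
  refine (integral_mono_of_nonneg (.of_forall fun x => excessPow_nonneg γ _)
    (((hindφ.integrable_mul hint1 hint2).add hint1).add hint2)
    (.of_forall fun x => excessPow_mul_le hγ0.le hγ1 (hpos1 x))).trans_eq ?_
  exact integral_mul_add_add_of_indepFun_of_identDistrib hindφ hidφ hint1

/-- One step of the fractional moment bound: if `R1, R2` are independent copies of the
nonnegative random variable `R_n` and `A = E[([R_n - 1]^+)^γ]`, then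
`E[([R_{n+1} - 1]^+)^γ] ≤ (A^2 + 2A)/B^γ` for `γ ∈ (0,1]`. -/
theorem stmt6 {Ω : Type*} [MeasurableSpace Ω] (μ : Measure Ω) [IsProbabilityMeasure μ]
    (B γ : ℝ) (hB : 2 < B) (hγ : γ ∈ Set.Ioc (0 : ℝ) 1)
    (R1 R2 : Ω → ℝ) (hind : IndepFun R1 R2 μ) (hid : IdentDistrib R1 R2 μ μ)
    (hpos1 : ∀ x, 0 ≤ R1 x) (hpos2 : ∀ x, 0 ≤ R2 x)
    (hint1 : Integrable (fun x => max (R1 x - 1) 0 ^ γ) μ)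
    (hint2 : Integrable (fun x => max (R2 x - 1) 0 ^ γ) μ)
    (hint3 : Integrable (fun x => max ((R1 x * R2 x + (B - 1)) / B - 1) 0 ^ γ) μ) :
    ∫ x, max ((R1 x * R2 x + (B - 1)) / B - 1) 0 ^ γ ∂μ ≤
      ((∫ x, max (R1 x - 1) 0 ^ γ ∂μ) ^ 2 + 2 * ∫ x, max (R1 x - 1) 0 ^ γ ∂μ) / B ^ γ :=
  stmt6_general μ B γ hB hγ R1 R2 hind hid hpos1 hint1
end

section
/- If A_n := E[([R_n-1]^+)^γ] → 0 for some γ ∈ (0,1], then E[log R_n] ≤ (1/γ) log(A_n + 1), and in particular limsup_n 2^{-n} E[log R_n] ≤ 0, hence the free energy vanishes. -/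
open MeasureTheory Filter Topology

/-!
Pointwise, subadditivity of `t ↦ t ^ γ` for `γ ≤ 1` gives `r ^ γ ≤ 1 + ([r - 1]⁺) ^ γ`, hence
`log r ≤ γ⁻¹ log (1 + ([r - 1]⁺) ^ γ)`. Jensen's inequality for the concave `t ↦ log (1 + t)` then
bounds `E[log R_n]` by `γ⁻¹ log (1 + A_n)`, which tends to `0`. Together with
`E[log R_n] ≥ log ((B - 1) / B)` this keeps `E[log R_n]` bounded, so `2⁻ⁿ E[log R_n] → 0`.
-/

lemma log_le_inv_mul_log_one_add_rpow_max {r γ : ℝ} (hr : 0 ≤ r) (hγ0 : 0 < γ) (hγ1 : γ ≤ 1) :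
    Real.log r ≤ γ⁻¹ * Real.log (1 + max (r - 1) 0 ^ γ) := by
  rcases le_or_gt r 1 with hr1 | hr1
  · exact (Real.log_nonpos hr hr1).trans <| mul_nonneg (inv_nonneg.2 hγ0.le) <|
      Real.log_nonneg (le_add_of_nonneg_right (by positivity))
  · have hsub : r ^ γ ≤ 1 + (r - 1) ^ γ := by
      simpa using Real.rpow_add_le_add_rpow zero_le_one (sub_nonneg.2 hr1.le) hγ0.le hγ1
    rw [max_eq_left (by linarith), le_inv_mul_iff₀ hγ0, ← Real.log_rpow (by linarith)]
    exact Real.log_le_log (by positivity) hsub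

lemma concaveOn_log_one_add : ConcaveOn ℝ (Set.Ici 0) fun t : ℝ => Real.log (1 + t) :=
  (strictConcaveOn_log_Ioi.concaveOn.translate_right 1).subset
    (fun t (ht : 0 ≤ t) => show 0 < 1 + t by linarith) (convex_Ici 0)

lemma tendsto_div_two_pow_of_le_of_le {u v : ℕ → ℝ} {c L : ℝ} (hc : ∀ᶠ n in atTop, c ≤ u n)
    (huv : ∀ n, u n ≤ v n) (hv : Tendsto v atTop (𝓝 L)) :
    Tendsto (fun n => u n / 2 ^ n) atTop (𝓝 0) := by
  have h2 : Tendsto (fun n : ℕ => (2 : ℝ) ^ n) atTop atTop :=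
    tendsto_pow_atTop_atTop_of_one_lt one_lt_two
  refine tendsto_of_tendsto_of_tendsto_of_le_of_le' ((tendsto_const_nhds (x := c)).div_atTop h2)
    (hv.div_atTop h2) ?_ (.of_forall fun n => ?_)
  · filter_upwards [hc] with n hn using div_le_div_of_nonneg_right hn (by positivity)
  · exact div_le_div_of_nonneg_right (huv n) (by positivity)

section

variable {Ω : Type*} [MeasurableSpace Ω] {μ : Measure Ω}

lemma MeasureTheory.Integrable.log_one_add {X : Ω → ℝ} (hX : Integrable X μ)
    (hX0 : ∀ x, 0 ≤ X x) : Integrable (fun x => Real.log (1 + X x)) μ := by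
  refine hX.mono' (hX.aemeasurable.const_add 1).log.aestronglyMeasurable (.of_forall fun x => ?_)
  have h1 : 0 < 1 + X x := by linarith [hX0 x]
  rw [Real.norm_of_nonneg (Real.log_nonneg (by linarith [hX0 x]))]
  linarith [Real.log_le_sub_one_of_pos h1]

lemma integral_log_one_add_le [IsProbabilityMeasure μ] {X : Ω → ℝ} (hX : Integrable X μ)
    (hX0 : ∀ x, 0 ≤ X x) : ∫ x, Real.log (1 + X x) ∂μ ≤ Real.log (1 + ∫ x, X x ∂μ) :=
  concaveOn_log_one_add.le_map_integral
    (Real.continuousOn_log.comp (continuous_const.add continuous_id).continuousOn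
      fun t (ht : 0 ≤ t) => show 1 + t ≠ 0 by positivity)
    isClosed_Ici (.of_forall hX0) hX (hX.log_one_add hX0)

lemma integral_log_le_inv_mul_log_one_add_integral_rpow [IsProbabilityMeasure μ] {Y : Ω → ℝ}
    {γ : ℝ} (hγ0 : 0 < γ) (hγ1 : γ ≤ 1) (hY : ∀ x, 0 ≤ Y x)
    (hlog : Integrable (fun x => Real.log (Y x)) μ)
    (hpow : Integrable (fun x => max (Y x - 1) 0 ^ γ) μ) :
    ∫ x, Real.log (Y x) ∂μ ≤ γ⁻¹ * Real.log (1 + ∫ x, max (Y x - 1) 0 ^ γ ∂μ) := by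
  have hpow0 : ∀ x, 0 ≤ max (Y x - 1) 0 ^ γ := fun x => by positivity
  calc ∫ x, Real.log (Y x) ∂μ
      ≤ ∫ x, γ⁻¹ * Real.log (1 + max (Y x - 1) 0 ^ γ) ∂μ :=
        integral_mono hlog ((hpow.log_one_add hpow0).const_mul _) fun x =>
          log_le_inv_mul_log_one_add_rpow_max (hY x) hγ0 hγ1
    _ = γ⁻¹ * ∫ x, Real.log (1 + max (Y x - 1) 0 ^ γ) ∂μ := integral_const_mul _ _
    _ ≤ γ⁻¹ * Real.log (1 + ∫ x, max (Y x - 1) 0 ^ γ ∂μ) :=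
        mul_le_mul_of_nonneg_left (integral_log_one_add_le hpow hpow0) (inv_nonneg.2 hγ0.le)

lemma log_le_integral_log [IsProbabilityMeasure μ] {Y : Ω → ℝ} {c : ℝ} (hc : 0 < c)
    (hcY : ∀ x, c ≤ Y x) (hlog : Integrable (fun x => Real.log (Y x)) μ) :
    Real.log c ≤ ∫ x, Real.log (Y x) ∂μ := by
  simpa using integral_mono (integrable_const (Real.log c)) hlog fun x =>
    Real.log_le_log hc (hcY x)

end

/-- If `A n := E[([R_n - 1]^+)^γ] → 0` for some `γ ∈ (0,1]`, then
`E[log R_n] ≤ (1/γ) log (A n + 1)`; in particular `limsup 2^{-n} E[log R_n] ≤ 0`,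
hence (using the lower bound `R n ≥ (B-1)/B`) the free energy vanishes. -/
theorem stmt8 {Ω : Type*} [MeasurableSpace Ω] (μ : Measure Ω) [IsProbabilityMeasure μ]
    (B γ : ℝ) (hB : 2 < B) (hγ : γ ∈ Set.Ioc (0 : ℝ) 1)
    (R : ℕ → Ω → ℝ) (hpos : ∀ n x, 0 ≤ R n x)
    (hlb : ∀ n, 1 ≤ n → ∀ x, (B - 1) / B ≤ R n x)
    (hintlog : ∀ n, Integrable (fun x => Real.log (R n x)) μ)
    (hintA : ∀ n, Integrable (fun x => max (R n x - 1) 0 ^ γ) μ)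
    (A : ℕ → ℝ) (hA : ∀ n, A n = ∫ x, max (R n x - 1) 0 ^ γ ∂μ)
    (hA0 : Tendsto A atTop (𝓝 0)) :
    (∀ n, ∫ x, Real.log (R n x) ∂μ ≤ (1 / γ) * Real.log (A n + 1)) ∧
    limsup (fun n => (∫ x, Real.log (R n x) ∂μ) / 2 ^ n) atTop ≤ 0 ∧
    Tendsto (fun n => (∫ x, Real.log (R n x) ∂μ) / 2 ^ n) atTop (𝓝 0) := by
  obtain ⟨hγ0, hγ1⟩ := hγ
  have hupper (n : ℕ) : ∫ x, Real.log (R n x) ∂μ ≤ (1 / γ) * Real.log (A n + 1) := by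
    rw [one_div, hA, add_comm]
    exact integral_log_le_inv_mul_log_one_add_integral_rpow hγ0 hγ1 (hpos n) (hintlog n) (hintA n)
  have hlower : ∀ᶠ n in atTop, Real.log ((B - 1) / B) ≤ ∫ x, Real.log (R n x) ∂μ := by
    filter_upwards [eventually_ge_atTop 1] with n hn
    exact log_le_integral_log (div_pos (by linarith) (by linarith)) (hlb n hn) (hintlog n)
  have hfree := tendsto_div_two_pow_of_le_of_le hlower hupper
    (((hA0.add_const 1).log (by norm_num)).const_mul (1 / γ))
  exact ⟨hupper, hfree.limsup_eq.le, hfree⟩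
end

section
/- The sequence 2^{-n} E[log(R_n/B)] is non-decreasing in n ≥ 1 and the sequence 2^{-n} E[log(K_B R_n)] is non-increasing in n ≥ 1, where K_B = (B^2+B-1)/(B(B-1)); consequently both converge to a common limit F(β,h), and for all N ≥ 1: F_N - 2^{-N} log B ≤ F ≤ F_N + 2^{-N} log K_B, where F_N := 2^{-N} E[log R_N]. -/
open MeasureTheory ProbabilityTheory Filter Topology

/-!
Write `a n = E[log R_n]`. Since `R_{n+1}` has the law of `(R R' + (B - 1)) / B` with `R, R'`
copies of `R_n`, taking logarithms and expectations sandwiches `a (n + 1)` between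
`2 a n - log B` and `2 a n + log K_B`; the lower bound because `R R' / B ≤ (R R' + (B - 1)) / B`,
the upper one because `R, R' ≥ (B - 1) / B`. Dividing by `2^(n+1)`, `(a n - log B) / 2^n`
increases and `(a n + log K_B) / 2^n` decreases, and their difference tends to `0`.
-/

open Real Set

section DoublingSequence

variable {a : ℕ → ℝ} {c d : ℝ}

theorem monotoneOn_sub_div_two_pow (hlow : ∀ n ≥ 1, 2 * a n - c ≤ a (n + 1)) :
    MonotoneOn (fun n => (a n - c) / 2 ^ n) (Ici 1) := by
  refine monotoneOn_nat_Ici_of_le_succ fun n hn => ?_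
  rw [div_le_div_iff₀ (by positivity) (by positivity), pow_succ]
  nlinarith [hlow n hn, pow_pos (two_pos : (0 : ℝ) < 2) n]

theorem antitoneOn_add_div_two_pow (hup : ∀ n ≥ 1, a (n + 1) ≤ 2 * a n + d) :
    AntitoneOn (fun n => (a n + d) / 2 ^ n) (Ici 1) := by
  refine antitoneOn_nat_Ici_of_succ_le fun n hn => ?_
  rw [div_le_div_iff₀ (by positivity) (by positivity), pow_succ]
  nlinarith [hup n hn, pow_pos (two_pos : (0 : ℝ) < 2) n]

theorem exists_tendsto_of_doubling_bounds (hlow : ∀ n ≥ 1, 2 * a n - c ≤ a (n + 1))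
    (hup : ∀ n ≥ 1, a (n + 1) ≤ 2 * a n + d) :
    ∃ F, Tendsto (fun n => (a n - c) / 2 ^ n) atTop (𝓝 F) ∧
      Tendsto (fun n => (a n + d) / 2 ^ n) atTop (𝓝 F) ∧
      ∀ N ≥ 1, (a N - c) / 2 ^ N ≤ F ∧ F ≤ (a N + d) / 2 ^ N := by
  have hcd : 0 ≤ c + d := by linarith [hlow 1 le_rfl, hup 1 le_rfl]
  have hmono := monotoneOn_sub_div_two_pow hlow
  have hanti := antitoneOn_add_div_two_pow hup
  have hgap : ∀ n, (a n + d) / 2 ^ n = (a n - c) / 2 ^ n + (c + d) / 2 ^ n := fun n => by ring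
  have hbdd : BddAbove ((fun n => (a n - c) / 2 ^ n) '' Ici 1) := by
    refine ⟨(a 1 + d) / 2 ^ 1, ?_⟩
    rintro _ ⟨n, hn, rfl⟩
    calc (a n - c) / 2 ^ n ≤ (a n + d) / 2 ^ n := by gcongr; linarith
      _ ≤ (a 1 + d) / 2 ^ 1 := hanti (mem_Ici.2 le_rfl) hn hn
  have hlim := Real.tendsto_atTop_csSup_of_monotoneOn_bddAbove_nat_Ici hmono hbdd
  have hlim' : Tendsto (fun n => (a n + d) / 2 ^ n) atTop
      (𝓝 (sSup ((fun n => (a n - c) / 2 ^ n) '' Ici 1))) := by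
    simp_rw [hgap]
    simpa using hlim.add
      (tendsto_const_nhds.div_atTop (tendsto_pow_atTop_atTop_of_one_lt one_lt_two))
  refine ⟨_, hlim, hlim', fun N hN => ⟨le_csSup hbdd ⟨N, hN, rfl⟩, ?_⟩⟩
  exact le_of_tendsto hlim' (eventually_atTop.2
    ⟨N, fun m hm => hanti (mem_Ici.2 hN) (mem_Ici.2 (hN.trans hm)) hm⟩)

end DoublingSequence

section RecursionStep

variable {B x y : ℝ}

-- `K_B = 1 / B + B / (B - 1)`, so the claim reduces to `x y ≥ ((B - 1) / B) ^ 2`.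
theorem mul_add_div_le_mul (hB : 1 < B) (hx : (B - 1) / B ≤ x) (hy : (B - 1) / B ≤ y) :
    (x * y + (B - 1)) / B ≤ (B ^ 2 + B - 1) / (B * (B - 1)) * (x * y) := by
  have hB0 : 0 < B := by linarith
  have hx' : B - 1 ≤ B * x := by rwa [div_le_iff₀' hB0] at hx
  have hy' : B - 1 ≤ B * y := by rwa [div_le_iff₀' hB0] at hy
  have hprod : (B - 1) * (B - 1) ≤ (B * x) * (B * y) :=
    mul_le_mul hx' hy' (by linarith) (by linarith)
  rw [div_le_iff₀ hB0, div_mul_eq_mul_div, div_mul_eq_mul_div,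
    le_div_iff₀ (by nlinarith)]
  nlinarith

theorem log_mul_add_div_bounds (hB : 1 < B) (hx : (B - 1) / B ≤ x) (hy : (B - 1) / B ≤ y) :
    log x + log y - log B ≤ log ((x * y + (B - 1)) / B) ∧
      log ((x * y + (B - 1)) / B) ≤
        log x + log y + log ((B ^ 2 + B - 1) / (B * (B - 1))) := by
  have hB0 : 0 < B := by linarith
  have hx0 : 0 < x := (div_pos (by linarith) hB0).trans_le hx
  have hy0 : 0 < y := (div_pos (by linarith) hB0).trans_le hy
  have hK0 : 0 < (B ^ 2 + B - 1) / (B * (B - 1)) := div_pos (by nlinarith) (by nlinarith)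
  rw [← log_mul hx0.ne' hy0.ne', ← log_div (by positivity) hB0.ne',
    ← log_mul (by positivity) hK0.ne', mul_comm (x * y)]
  exact ⟨log_le_log (by positivity) (by gcongr; linarith),
    log_le_log (by positivity) (mul_add_div_le_mul hB hx hy)⟩

variable {Ω : Type*} [MeasurableSpace Ω] {μ : Measure Ω} [IsProbabilityMeasure μ]
  {R X Y Z : Ω → ℝ}

theorem integral_log_bounds_of_identDistrib (hB : 1 < B) (hX : IdentDistrib X R μ μ)
    (hY : IdentDistrib Y R μ μ)
    (hZ : IdentDistrib Z (fun ω => (X ω * Y ω + (B - 1)) / B) μ μ)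
    (hR : ∀ ω, (B - 1) / B ≤ R ω) (hint : Integrable (fun ω => log (R ω)) μ)
    (hintZ : Integrable (fun ω => log (Z ω)) μ) :
    2 * ∫ ω, log (R ω) ∂μ - log B ≤ ∫ ω, log (Z ω) ∂μ ∧
      ∫ ω, log (Z ω) ∂μ ≤
        2 * ∫ ω, log (R ω) ∂μ + log ((B ^ 2 + B - 1) / (B * (B - 1))) := by
  have hXlog : IdentDistrib (fun ω => log (X ω)) (fun ω => log (R ω)) μ μ :=
    hX.comp measurable_log
  have hYlog : IdentDistrib (fun ω => log (Y ω)) (fun ω => log (R ω)) μ μ :=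
    hY.comp measurable_log
  have hZlog : IdentDistrib (fun ω => log (Z ω))
      (fun ω => log ((X ω * Y ω + (B - 1)) / B)) μ μ :=
    hZ.comp measurable_log
  have hsum : Integrable (fun ω => log (X ω) + log (Y ω)) μ :=
    (hXlog.integrable_iff.2 hint).add (hYlog.integrable_iff.2 hint)
  have hsum_eq : ∫ ω, log (X ω) + log (Y ω) ∂μ = 2 * ∫ ω, log (R ω) ∂μ := by
    rw [integral_add (hXlog.integrable_iff.2 hint) (hYlog.integrable_iff.2 hint),
      hXlog.integral_eq, hYlog.integral_eq, two_mul]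
  have hrhs := hZlog.integrable_iff.1 hintZ
  have hXlb := hX.symm.ae_mem_snd measurableSet_Ici (ae_of_all _ hR)
  have hYlb := hY.symm.ae_mem_snd measurableSet_Ici (ae_of_all _ hR)
  rw [hZlog.integral_eq]
  constructor
  · calc 2 * ∫ ω, log (R ω) ∂μ - log B = ∫ ω, log (X ω) + log (Y ω) - log B ∂μ := by
          simp [integral_sub hsum (integrable_const _), hsum_eq]
      _ ≤ _ := integral_mono_ae (hsum.sub (integrable_const _)) hrhs (by
          filter_upwards [hXlb, hYlb] with ω hx hy using (log_mul_add_div_bounds hB hx hy).1)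
  · calc _ ≤ ∫ ω, log (X ω) + log (Y ω) + log ((B ^ 2 + B - 1) / (B * (B - 1))) ∂μ :=
          integral_mono_ae hrhs (hsum.add (integrable_const _)) (by
          filter_upwards [hXlb, hYlb] with ω hx hy using (log_mul_add_div_bounds hB hx hy).2)
      _ = _ := by simp [integral_add hsum (integrable_const _), hsum_eq]

end RecursionStep

theorem stmt10_general {Ω : Type*} [MeasurableSpace Ω] (μ : Measure Ω) [IsProbabilityMeasure μ]
    (B : ℝ) (hB : 2 < B) (R : ℕ → Ω → ℝ)
    (hlb : ∀ n, 1 ≤ n → ∀ x, (B - 1) / B ≤ R n x)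
    (hintlog : ∀ n, Integrable (fun x => Real.log (R n x)) μ)
    (hrec : ∀ n, ∃ R1 R2 : Ω → ℝ, IndepFun R1 R2 μ ∧
      IdentDistrib R1 (R n) μ μ ∧ IdentDistrib R2 (R n) μ μ ∧
      IdentDistrib (R (n + 1)) (fun x => (R1 x * R2 x + (B - 1)) / B) μ μ) :
    (∀ n m, 1 ≤ n → n ≤ m →
      (∫ x, Real.log (R n x / B) ∂μ) / 2 ^ n ≤ (∫ x, Real.log (R m x / B) ∂μ) / 2 ^ m) ∧
    (∀ n m, 1 ≤ n → n ≤ m →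
      (∫ x, Real.log ((B ^ 2 + B - 1) / (B * (B - 1)) * R m x) ∂μ) / 2 ^ m ≤
        (∫ x, Real.log ((B ^ 2 + B - 1) / (B * (B - 1)) * R n x) ∂μ) / 2 ^ n) ∧
    ∃ F : ℝ,
      Tendsto (fun n => (∫ x, Real.log (R n x / B) ∂μ) / 2 ^ n) atTop (𝓝 F) ∧
      Tendsto (fun n => (∫ x, Real.log ((B ^ 2 + B - 1) / (B * (B - 1)) * R n x) ∂μ) / 2 ^ n)
        atTop (𝓝 F) ∧
      ∀ N, 1 ≤ N →
        (∫ x, Real.log (R N x) ∂μ) / 2 ^ N - Real.log B / 2 ^ N ≤ F ∧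
        F ≤ (∫ x, Real.log (R N x) ∂μ) / 2 ^ N +
              Real.log ((B ^ 2 + B - 1) / (B * (B - 1))) / 2 ^ N := by
  have hB1 : 1 < B := by linarith
  set K := (B ^ 2 + B - 1) / (B * (B - 1))
  set a : ℕ → ℝ := fun n => ∫ x, log (R n x) ∂μ
  have hstep : ∀ n ≥ 1, 2 * a n - log B ≤ a (n + 1) ∧ a (n + 1) ≤ 2 * a n + log K := by
    intro n hn
    obtain ⟨R1, R2, -, h1, h2, h3⟩ := hrec n
    exact integral_log_bounds_of_identDistrib hB1 h1 h2 h3 (hlb n hn) (hintlog n)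
      (hintlog (n + 1))
  have hRpos : ∀ n ≥ 1, ∀ x, 0 < R n x := fun n hn x =>
    (div_pos (by linarith) (by linarith)).trans_le (hlb n hn x)
  have hlower : ∀ n ≥ 1, (∫ x, log (R n x / B) ∂μ) / 2 ^ n = (a n - log B) / 2 ^ n := by
    intro n hn
    rw [integral_congr_ae (ae_of_all _ fun x => log_div (hRpos n hn x).ne' (by linarith)),
      integral_sub (hintlog n) (integrable_const _), integral_const, probReal_univ, one_smul]
  have hupper : ∀ n ≥ 1, (∫ x, log (K * R n x) ∂μ) / 2 ^ n = (a n + log K) / 2 ^ n := by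
    intro n hn
    have hK : K ≠ 0 := (div_pos (by nlinarith) (by nlinarith)).ne'
    rw [integral_congr_ae (ae_of_all _ fun x => log_mul hK (hRpos n hn x).ne'),
      integral_add (integrable_const _) (hintlog n), integral_const, probReal_univ, one_smul,
      add_comm]
  obtain ⟨F, hFlower, hFupper, hbounds⟩ := exists_tendsto_of_doubling_bounds
    (fun n hn => (hstep n hn).1) (fun n hn => (hstep n hn).2)
  refine ⟨fun n m hn hnm => ?_, fun n m hn hnm => ?_, F, ?_, ?_, fun N hN => ?_⟩
  · rw [hlower n hn, hlower m (hn.trans hnm)]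
    exact monotoneOn_sub_div_two_pow (fun n hn => (hstep n hn).1) hn (hn.trans hnm) hnm
  · rw [hupper n hn, hupper m (hn.trans hnm)]
    exact antitoneOn_add_div_two_pow (fun n hn => (hstep n hn).2) hn (hn.trans hnm) hnm
  · exact hFlower.congr' (eventually_atTop.2 ⟨1, fun n hn => (hlower n hn).symm⟩)
  · exact hFupper.congr' (eventually_atTop.2 ⟨1, fun n hn => (hupper n hn).symm⟩)
  · rw [← sub_div, ← add_div]
    exact hbounds N hN

/-- The sequence `2^{-n} E[log (R_n/B)]` is non-decreasing (for `n ≥ 1`), the sequence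
`2^{-n} E[log (K_B R_n)]` is non-increasing (for `n ≥ 1`), both converge to a common
limit `F`, and `F_N - 2^{-N} log B ≤ F ≤ F_N + 2^{-N} log K_B` where
`F_N = 2^{-N} E[log R_N]` and `K_B = (B^2+B-1)/(B(B-1))`. Here the hierarchical
recursion is expressed in distribution: `R (n+1)` has the law of
`(R1 * R2 + (B-1))/B` with `R1, R2` independent copies of `R n`. -/
theorem stmt10 {Ω : Type*} [MeasurableSpace Ω] (μ : Measure Ω) [IsProbabilityMeasure μ]
    (B : ℝ) (hB : 2 < B) (R : ℕ → Ω → ℝ)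
    (hlb : ∀ n, 1 ≤ n → ∀ x, (B - 1) / B ≤ R n x)
    (hpos : ∀ n x, 0 < R n x)
    (hintlog : ∀ n, Integrable (fun x => Real.log (R n x)) μ)
    (hrec : ∀ n, ∃ R1 R2 : Ω → ℝ, IndepFun R1 R2 μ ∧
      IdentDistrib R1 (R n) μ μ ∧ IdentDistrib R2 (R n) μ μ ∧
      IdentDistrib (R (n + 1)) (fun x => (R1 x * R2 x + (B - 1)) / B) μ μ) :
    (∀ n m, 1 ≤ n → n ≤ m →
      (∫ x, Real.log (R n x / B) ∂μ) / 2 ^ n ≤ (∫ x, Real.log (R m x / B) ∂μ) / 2 ^ m) ∧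
    (∀ n m, 1 ≤ n → n ≤ m →
      (∫ x, Real.log ((B ^ 2 + B - 1) / (B * (B - 1)) * R m x) ∂μ) / 2 ^ m ≤
        (∫ x, Real.log ((B ^ 2 + B - 1) / (B * (B - 1)) * R n x) ∂μ) / 2 ^ n) ∧
    ∃ F : ℝ,
      Tendsto (fun n => (∫ x, Real.log (R n x / B) ∂μ) / 2 ^ n) atTop (𝓝 F) ∧
      Tendsto (fun n => (∫ x, Real.log ((B ^ 2 + B - 1) / (B * (B - 1)) * R n x) ∂μ) / 2 ^ n)
        atTop (𝓝 F) ∧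
      ∀ N, 1 ≤ N →
        (∫ x, Real.log (R N x) ∂μ) / 2 ^ N - Real.log B / 2 ^ N ≤ F ∧
        F ≤ (∫ x, Real.log (R N x) ∂μ) / 2 ^ N +
              Real.log ((B ^ 2 + B - 1) / (B * (B - 1))) / 2 ^ N :=
  stmt10_general μ B hB R hlb hintlog hrec
end

section
/- The annealed critical point is h_c = log(B-1): for h ≤ log(B-1) the annealed free energy F(0,h) = lim_n 2^{-n} log ⟨R_n⟩ equals 0, while for h > log(B-1) it is strictly positive. -/
open Filter Topology

/-- The annealed critical point is `h_c = log (B-1)`: the annealed free energy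
`F h = lim_n 2^{-n} log r_n` (with `r_0 = e^h` and `r_{n+1} = (r_n^2 + (B-1))/B`)
vanishes for `h ≤ log (B-1)` and is strictly positive for `h > log (B-1)`. -/
theorem stmt12 (B : ℝ) (hB : 2 < B) (r : ℝ → ℕ → ℝ)
    (hr0 : ∀ h, r h 0 = Real.exp h)
    (hrec : ∀ h n, r h (n + 1) = ((r h n) ^ 2 + (B - 1)) / B)
    (F : ℝ → ℝ)
    (hF : ∀ h, Tendsto (fun n => Real.log (r h n) / 2 ^ n) atTop (𝓝 (F h))) :
    ∀ h : ℝ, (h ≤ Real.log (B - 1) → F h = 0) ∧ (Real.log (B - 1) < h → 0 < F h) := by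
  intro h
  have hB0 : (0:ℝ) < B := by linarith
  have hB1 : (1:ℝ) < B - 1 := by linarith
  have hB1' : (0:ℝ) < B - 1 := by linarith
  constructor
  · -- subcritical case
    intro hle
    have hr0le : Real.exp h ≤ B - 1 := by
      calc Real.exp h ≤ Real.exp (Real.log (B-1)) := Real.exp_le_exp.mpr hle
        _ = B - 1 := Real.exp_log hB1'
    set m : ℝ := min (Real.exp h) ((B-1)/B) with hm
    have hmpos : 0 < m := lt_min (Real.exp_pos h) (by positivity)
    have hbound : ∀ n, m ≤ r h n ∧ r h n ≤ B - 1 := by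
      intro n
      induction n with
      | zero => rw [hr0]; exact ⟨min_le_left _ _, hr0le⟩
      | succ n ih =>
        obtain ⟨h1, h2⟩ := ih
        rw [hrec]
        constructor
        · calc m ≤ (B-1)/B := min_le_right _ _
            _ ≤ ((r h n)^2 + (B-1))/B := by
              gcongr
              nlinarith [sq_nonneg (r h n)]
        · rw [div_le_iff₀ hB0]; nlinarith
    set M : ℝ := max (-Real.log m) (Real.log (B-1)) with hM
    have habs : ∀ n : ℕ, |Real.log (r h n) / 2 ^ n| ≤ M / 2 ^ n := by
      intro n
      have h2n : (0:ℝ) < 2 ^ n := by positivity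
      rw [abs_div, abs_of_pos h2n]
      gcongr
      obtain ⟨h1, h2⟩ := hbound n
      rw [abs_le]
      constructor
      · have : Real.log m ≤ Real.log (r h n) := Real.log_le_log hmpos h1
        have hMle : -Real.log m ≤ M := le_max_left _ _
        linarith
      · have : Real.log (r h n) ≤ Real.log (B-1) :=
          Real.log_le_log (lt_of_lt_of_le hmpos h1) h2
        have hMle : Real.log (B-1) ≤ M := le_max_right _ _
        linarith
    have htend0 : Tendsto (fun n : ℕ => Real.log (r h n) / 2 ^ n) atTop (𝓝 0) := by
      apply squeeze_zero_norm habs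
      have : Tendsto (fun n : ℕ => M * (1/2 : ℝ) ^ n) atTop (𝓝 (M * 0)) :=
        tendsto_const_nhds.mul
          (tendsto_pow_atTop_nhds_zero_of_lt_one (by norm_num) (by norm_num))
      simpa [div_eq_mul_inv, inv_pow, one_div] using this
    exact tendsto_nhds_unique (hF h) htend0
  · -- supercritical case
    intro hlt
    have hr0gt : B - 1 < Real.exp h := by
      calc B - 1 = Real.exp (Real.log (B-1)) := (Real.exp_log hB1').symm
        _ < Real.exp h := Real.exp_lt_exp.mpr hlt
    set c : ℝ := (B - 2) * (Real.exp h - (B-1)) / B with hc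
    have hcpos : 0 < c := by
      apply div_pos _ hB0
      apply mul_pos (by linarith) (by linarith)
    have hgrow : ∀ n : ℕ, B - 1 < r h n ∧ Real.exp h + n * c ≤ r h n := by
      intro n
      induction n with
      | zero => rw [hr0]; exact ⟨hr0gt, by simp⟩
      | succ n ih =>
        obtain ⟨h1, h2⟩ := ih
        have hrge : Real.exp h ≤ r h n := by
          have : (0:ℝ) ≤ n * c := by positivity
          linarith
        have hkey : r h n + c ≤ r h (n+1) := by
          rw [hrec, le_div_iff₀ hB0, hc]
          have e1 : (B - 2) * (Real.exp h - (B-1)) ≤ (r h n - 1) * (r h n - (B-1)) := by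
            apply mul_le_mul (by linarith) (by linarith) (by linarith) (by linarith)
          have e2 : (B - 2) * (Real.exp h - (B-1)) / B * B
              = (B - 2) * (Real.exp h - (B-1)) := by
            field_simp
          nlinarith [e1, e2]
        refine ⟨by linarith, ?_⟩
        push_cast
        linarith
    -- pick N with r h N ≥ B * B
    obtain ⟨N, hN⟩ := exists_nat_ge ((B*B - Real.exp h)/c)
    have hrN : B * B ≤ r h N := by
      have h2 := (hgrow N).2
      rw [div_le_iff₀ hcpos] at hN
      linarith
    have hlogB : 0 < Real.log B := Real.log_pos (by linarith)
    set a : ℝ := Real.log (r h N) - Real.log B with ha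
    have hapos : 0 < a := by
      have : Real.log (B*B) ≤ Real.log (r h N) :=
        Real.log_le_log (by positivity) hrN
      rw [Real.log_mul (by positivity) (by positivity)] at this
      rw [ha]; linarith
    have hpos : ∀ n, 0 < r h n := fun n => lt_trans (by linarith) (hgrow n).1
    -- doubling of log r - log B
    have hdouble : ∀ k : ℕ, 2 ^ k * a ≤ Real.log (r h (N + k)) - Real.log B := by
      intro k
      induction k with
      | zero => simp [ha]
      | succ k ih =>
        have hstep : 2 * Real.log (r h (N+k)) - Real.log B ≤ Real.log (r h (N+k+1)) := by
          have hineq : (r h (N+k))^2 / B ≤ r h (N+k+1) := by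
            rw [hrec]; gcongr; linarith
          have hlog : Real.log ((r h (N+k))^2 / B) ≤ Real.log (r h (N+k+1)) :=
            Real.log_le_log (div_pos (pow_pos (hpos _) 2) hB0) hineq
          rw [Real.log_div (ne_of_gt (pow_pos (hpos _) 2)) (ne_of_gt hB0), Real.log_pow] at hlog
          push_cast at hlog
          linarith
        have hpow : (2:ℝ) ^ (k+1) * a = 2 * (2 ^ k * a) := by ring
        have hidx : N + (k+1) = N + k + 1 := by omega
        rw [hidx, hpow]
        linarith
    -- lower bound on F h
    have hFge : a / 2 ^ N ≤ F h := by
      apply ge_of_tendsto (hF h)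
      filter_upwards [eventually_ge_atTop N] with n hn
      obtain ⟨k, rfl⟩ := Nat.exists_eq_add_of_le hn
      have hd := hdouble k
      have h2Nk : (0:ℝ) < 2 ^ (N + k) := by positivity
      rw [div_le_div_iff₀ (by positivity) h2Nk]
      have : (2:ℝ) ^ (N + k) = 2 ^ N * 2 ^ k := by rw [pow_add]
      rw [this]
      have h2N : (0:ℝ) < 2 ^ N := by positivity
      have h2k : (0:ℝ) < 2 ^ k := by positivity
      nlinarith [hlogB]
    have : 0 < a / 2 ^ N := by positivity
    linarith
end

section
/- There exists c = c(B) > 0 such that for all h ∈ (h_c, h_c + 1), c^{-1}(h - h_c)^{1/α} ≤ F(0,h) ≤ c (h - h_c)^{1/α}, where h_c = log(B-1) and α = log(2(B-1)/B)/log 2. -/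
/-!
With `δ = r - (B - 1)` the recursion reads `δ ↦ δ (δ + 2 (B - 1)) / B`, a perturbation of
multiplication by `λ = 2 (B - 1) / B > 1`, and `δ₀ = r₀ - (B - 1) ≍ h - h_c`. So `δₙ` grows
like `λⁿ δ₀` until it reaches order one, after `N ≈ log_λ (1 / δ₀)` steps. Since
`2 log rₙ - log B ≤ log rₙ₊₁ ≤ 2 log rₙ`, the limit `F` is squeezed between
`(log r_N - log B) / 2^N` and `log r_N / 2^N`, which are both of order
`2^{-N} = δ₀ ^ (log 2 / log λ) = δ₀ ^ (1 / α)`. The growth is bounded below by the linear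
rate `λ` and, as long as `δ` stays of order one, also above, because `δ / (2κ + δ)` with
`κ = (B - 1)(B - 2) / B` grows at most by the factor `λ`.
-/

open Filter Topology Real

theorem rpow_logb_comm {b a y : ℝ} (ha : 0 < a) (hy : 0 < y) :
    y ^ logb b a = a ^ logb b y := by
  rw [rpow_def_of_pos hy, rpow_def_of_pos ha, logb, logb]
  ring_nf

theorem exists_le_pow_two_pow_le {l y : ℝ} (hl : 1 < l) (hy : 1 ≤ y) :
    ∃ N : ℕ, y ≤ l ^ N ∧ (2 : ℝ) ^ N ≤ 2 * y ^ logb l 2 := by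
  have ht : 0 ≤ logb l y := logb_nonneg hl hy
  refine ⟨⌈logb l y⌉₊, ?_, ?_⟩
  · calc y = l ^ logb l y := (rpow_logb (by linarith) hl.ne' (by linarith)).symm
      _ ≤ l ^ (⌈logb l y⌉₊ : ℝ) := rpow_le_rpow_of_exponent_le hl.le (Nat.le_ceil _)
      _ = l ^ ⌈logb l y⌉₊ := rpow_natCast _ _
  · calc (2 : ℝ) ^ ⌈logb l y⌉₊ = 2 ^ (⌈logb l y⌉₊ : ℝ) := (rpow_natCast _ _).symm
      _ ≤ 2 ^ (logb l y + 1) :=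
        rpow_le_rpow_of_exponent_le one_le_two (Nat.ceil_lt_add_one ht).le
      _ = 2 * y ^ logb l 2 := by
        rw [rpow_add_one two_ne_zero, rpow_logb_comm two_pos (by linarith), mul_comm]

theorem exists_pow_le_le_two_pow {l y : ℝ} (hl : 1 < l) (hy : 1 ≤ y) :
    ∃ N : ℕ, l ^ N ≤ y ∧ y ^ logb l 2 ≤ 2 * 2 ^ N := by
  have ht : 0 ≤ logb l y := logb_nonneg hl hy
  refine ⟨⌊logb l y⌋₊, ?_, ?_⟩
  · calc l ^ ⌊logb l y⌋₊ = l ^ (⌊logb l y⌋₊ : ℝ) := (rpow_natCast _ _).symm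
      _ ≤ l ^ logb l y := rpow_le_rpow_of_exponent_le hl.le (Nat.floor_le ht)
      _ = y := rpow_logb (by linarith) hl.ne' (by linarith)
  · calc y ^ logb l 2 = 2 ^ logb l y := rpow_logb_comm two_pos (by linarith)
      _ ≤ 2 ^ ((⌊logb l y⌋₊ : ℝ) + 1) :=
        rpow_le_rpow_of_exponent_le one_le_two (Nat.lt_floor_add_one _).le
      _ = 2 * 2 ^ ⌊logb l y⌋₊ := by rw [rpow_add_one two_ne_zero, rpow_natCast, mul_comm]

theorem le_div_two_pow_of_tendsto {a : ℕ → ℝ} {f : ℝ} (ha : ∀ n, a (n + 1) ≤ 2 * a n)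
    (hf : Tendsto (fun n => a n / 2 ^ n) atTop (𝓝 f)) (N : ℕ) : f ≤ a N / 2 ^ N := by
  refine Antitone.le_of_tendsto (antitone_nat_of_succ_le fun n => ?_) hf N
  rw [div_le_div_iff₀ (by positivity) (by positivity), pow_succ]
  nlinarith [ha n, pow_pos (two_pos : (0 : ℝ) < 2) n]

theorem sub_div_two_pow_le_of_tendsto {a : ℕ → ℝ} {c f : ℝ}
    (ha : ∀ n, 2 * a n - c ≤ a (n + 1))
    (hf : Tendsto (fun n => a n / 2 ^ n) atTop (𝓝 f)) (N : ℕ) : (a N - c) / 2 ^ N ≤ f := by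
  have hmono : Monotone fun n => (a n - c) / 2 ^ n := monotone_nat_of_le_succ fun n => by
    rw [div_le_div_iff₀ (by positivity) (by positivity), pow_succ]
    nlinarith [ha n, pow_pos (two_pos : (0 : ℝ) < 2) n]
  have hlim : Tendsto (fun n => (a n - c) / 2 ^ n) atTop (𝓝 f) := by
    have hc := (tendsto_pow_atTop_nhds_zero_of_lt_one (by norm_num : (0 : ℝ) ≤ 2⁻¹)
      (by norm_num)).const_mul c
    simpa [sub_mul, inv_pow, div_eq_mul_inv] using hf.sub hc
  exact hmono.ge_of_tendsto hlim N

theorem two_mul_log_eq_log_sq (x : ℝ) : 2 * log x = log (x ^ 2) := by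
  rw [log_pow]; norm_num

section QuadraticRecursion

variable {B : ℝ} {r : ℕ → ℝ}

theorem succ_sub_eq_mul_div (hB : B ≠ 0) (hrec : ∀ n, r (n + 1) = (r n ^ 2 + (B - 1)) / B) (n : ℕ) :
    r (n + 1) - (B - 1) = (r n - (B - 1)) * (r n - (B - 1) + 2 * (B - 1)) / B := by
  rw [hrec]
  field_simp
  ring

theorem sub_one_lt_of_sub_one_lt (hB : 1 < B) (hrec : ∀ n, r (n + 1) = (r n ^ 2 + (B - 1)) / B)
    (h0 : B - 1 < r 0) (n : ℕ) : B - 1 < r n := by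
  induction n with
  | zero => exact h0
  | succ n ih =>
    have hpos : 0 < r (n + 1) - (B - 1) := by
      rw [succ_sub_eq_mul_div (by positivity) hrec n]
      exact div_pos (mul_pos (by linarith) (by linarith)) (by linarith)
    linarith

theorem pow_mul_le_sub (hB : 1 < B) (hrec : ∀ n, r (n + 1) = (r n ^ 2 + (B - 1)) / B)
    (h0 : B - 1 < r 0) (n : ℕ) :
    (2 * (B - 1) / B) ^ n * (r 0 - (B - 1)) ≤ r n - (B - 1) := by
  induction n with
  | zero => simp
  | succ n ih =>
    have hδ : 0 ≤ r n - (B - 1) := by linarith [sub_one_lt_of_sub_one_lt hB hrec h0 n]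
    calc (2 * (B - 1) / B) ^ (n + 1) * (r 0 - (B - 1))
        = 2 * (B - 1) / B * ((2 * (B - 1) / B) ^ n * (r 0 - (B - 1))) := by ring
      _ ≤ 2 * (B - 1) / B * (r n - (B - 1)) := by gcongr
      _ ≤ (r n - (B - 1)) * (r n - (B - 1) + 2 * (B - 1)) / B := by
        rw [div_mul_eq_mul_div]
        exact div_le_div_of_nonneg_right (by nlinarith) (by linarith)
      _ = r (n + 1) - (B - 1) := (succ_sub_eq_mul_div (by positivity) hrec n).symm

/-- The constant `κ = (B - 1)(B - 2) / B` in the denominator is the largest one for which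
`gapRatio_step` holds. -/
noncomputable def gapRatio (B δ : ℝ) : ℝ := δ / (2 * ((B - 1) * (B - 2) / B) + δ)

theorem gapRatio_step (hB : 2 < B) {δ : ℝ} (hδ : 0 ≤ δ) :
    gapRatio B (δ * (δ + 2 * (B - 1)) / B) ≤ 2 * (B - 1) / B * gapRatio B δ := by
  have hB0 : 0 < B := by linarith
  have hB2 : 0 < B - 2 := by linarith
  have hκ : 0 < 2 * (B - 1) * (B - 2) := mul_pos (by linarith) hB2
  unfold gapRatio
  field_simp
  rw [div_le_iff₀ (add_pos_of_pos_of_nonneg hκ (mul_nonneg hδ (by linarith)))]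
  nlinarith [mul_nonneg (mul_nonneg hδ hδ) hB2.le, mul_nonneg hδ hδ]

theorem gapRatio_sub_le (hB : 2 < B) (hrec : ∀ n, r (n + 1) = (r n ^ 2 + (B - 1)) / B)
    (h0 : B - 1 < r 0) (n : ℕ) :
    gapRatio B (r n - (B - 1)) ≤ (2 * (B - 1) / B) ^ n * gapRatio B (r 0 - (B - 1)) := by
  induction n with
  | zero => simp
  | succ n ih =>
    have hδ : 0 ≤ r n - (B - 1) := by linarith [sub_one_lt_of_sub_one_lt (by linarith) hrec h0 n]
    calc gapRatio B (r (n + 1) - (B - 1))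
        ≤ 2 * (B - 1) / B * gapRatio B (r n - (B - 1)) := by
          rw [succ_sub_eq_mul_div (by positivity) hrec n]; exact gapRatio_step hB hδ
      _ ≤ 2 * (B - 1) / B * ((2 * (B - 1) / B) ^ n * gapRatio B (r 0 - (B - 1))) := by
          gcongr
          exact div_nonneg (by linarith) (by linarith)
      _ = _ := by ring

theorem sub_le_of_pow_mul_le (hB : 2 < B) (hrec : ∀ n, r (n + 1) = (r n ^ 2 + (B - 1)) / B)
    (h0 : B - 1 < r 0) {n : ℕ}
    (hn : (2 * (B - 1) / B) ^ n * (r 0 - (B - 1)) ≤ (B - 1) * (B - 2) / B) :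
    r n - (B - 1) ≤ 2 * ((B - 1) * (B - 2) / B) := by
  set κ := (B - 1) * (B - 2) / B
  have hκ : 0 < κ := div_pos (mul_pos (by linarith) (by linarith)) (by linarith)
  have hδ0 : 0 < r 0 - (B - 1) := by linarith
  have hδ : 0 ≤ r n - (B - 1) := by linarith [sub_one_lt_of_sub_one_lt (by linarith) hrec h0 n]
  have hratio : gapRatio B (r n - (B - 1)) ≤ 1 / 2 :=
    calc gapRatio B (r n - (B - 1))
        ≤ (2 * (B - 1) / B) ^ n * gapRatio B (r 0 - (B - 1)) := gapRatio_sub_le hB hrec h0 n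
      _ ≤ (2 * (B - 1) / B) ^ n * ((r 0 - (B - 1)) / (2 * κ)) := by
          refine mul_le_mul_of_nonneg_left ?_ (pow_nonneg (div_nonneg (by linarith) (by linarith)) n)
          exact div_le_div_of_nonneg_left hδ0.le (by positivity) (by linarith)
      _ ≤ κ / (2 * κ) := by rw [← mul_div_assoc]; gcongr
      _ = 1 / 2 := by field_simp
  unfold gapRatio at hratio
  rw [div_le_div_iff₀ (by positivity) two_pos] at hratio
  linarith

theorem log_succ_le_two_mul_log (hB : 1 < B) (hrec : ∀ n, r (n + 1) = (r n ^ 2 + (B - 1)) / B)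
    {n : ℕ} (hn : 1 ≤ r n) : log (r (n + 1)) ≤ 2 * log (r n) := by
  have hsucc : 0 < r (n + 1) := by rw [hrec]; exact div_pos (by nlinarith) (by linarith)
  rw [two_mul_log_eq_log_sq]
  refine log_le_log hsucc ?_
  rw [hrec, div_le_iff₀ (by linarith)]
  nlinarith [mul_nonneg (sub_nonneg.2 hB.le) (sub_nonneg.2 (one_le_pow₀ hn : 1 ≤ r n ^ 2))]

theorem two_mul_log_sub_log_le (hB : 1 < B) (hrec : ∀ n, r (n + 1) = (r n ^ 2 + (B - 1)) / B)
    {n : ℕ} (hn : 0 < r n) : 2 * log (r n) - log B ≤ log (r (n + 1)) := by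
  rw [two_mul_log_eq_log_sq, ← log_div (by positivity) (by linarith)]
  refine log_le_log (by positivity) ?_
  rw [hrec]
  exact div_le_div_of_nonneg_right (by linarith) (by linarith)

theorem mul_rpow_le_of_tendsto (hB : 2 < B) (hrec : ∀ n, r (n + 1) = (r n ^ 2 + (B - 1)) / B)
    {f : ℝ} (hf : Tendsto (fun n => log (r n) / 2 ^ n) atTop (𝓝 f)) {d : ℝ} (hd : 0 < d)
    (hdB : d ≤ B) (hd0 : d ≤ r 0 - (B - 1)) :
    log ((2 * B - 1) / B) / 2 * (d / B) ^ logb (2 * (B - 1) / B) 2 ≤ f := by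
  have hB0 : 0 < B := by linarith
  have hl : 1 < 2 * (B - 1) / B := by rw [lt_div_iff₀ hB0]; linarith
  have h0 : B - 1 < r 0 := by linarith
  obtain ⟨N, hlN, h2N⟩ := exists_le_pow_two_pow_le hl ((one_le_div hd).2 hdB)
  set p := logb (2 * (B - 1) / B) 2
  have hrN : 2 * B - 1 ≤ r N := by
    have hlNd : B ≤ (2 * (B - 1) / B) ^ N * d := by rwa [div_le_iff₀ hd] at hlN
    have := mul_le_mul_of_nonneg_left hd0 (pow_nonneg (zero_le_one.trans hl.le) N)
    linarith [pow_mul_le_sub (by linarith) hrec h0 N]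
  have hc : 0 < log ((2 * B - 1) / B) := log_pos (by rw [one_lt_div hB0]; linarith)
  calc log ((2 * B - 1) / B) / 2 * (d / B) ^ p
      = log ((2 * B - 1) / B) / (2 * (B / d) ^ p) := by
        rw [← inv_div B d, inv_rpow (by positivity)]; field_simp
    _ ≤ log ((2 * B - 1) / B) / 2 ^ N := div_le_div_of_nonneg_left hc.le (by positivity) h2N
    _ ≤ (log (r N) - log B) / 2 ^ N := by
        rw [← log_div (by linarith) hB0.ne']
        refine div_le_div_of_nonneg_right (log_le_log ?_ ?_) (by positivity)
        · exact div_pos (by linarith) hB0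
        · exact div_le_div_of_nonneg_right hrN hB0.le
    _ ≤ f := sub_div_two_pow_le_of_tendsto (a := fun n => log (r n))
        (fun n => two_mul_log_sub_log_le (by linarith) hrec
          (by linarith [sub_one_lt_of_sub_one_lt (by linarith) hrec h0 n])) hf N

theorem le_mul_rpow_of_tendsto (hB : 2 < B) (hrec : ∀ n, r (n + 1) = (r n ^ 2 + (B - 1)) / B)
    {f : ℝ} (hf : Tendsto (fun n => log (r n) / 2 ^ n) atTop (𝓝 f)) (h0 : B - 1 < r 0)
    {u : ℝ} (hu : r 0 - (B - 1) ≤ u) (huκ : u ≤ (B - 1) * (B - 2) / B) :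
    f ≤ 2 * log (B - 1 + 2 * ((B - 1) * (B - 2) / B)) *
      (u / ((B - 1) * (B - 2) / B)) ^ logb (2 * (B - 1) / B) 2 := by
  set κ := (B - 1) * (B - 2) / B
  set p := logb (2 * (B - 1) / B) 2
  have hB0 : 0 < B := by linarith
  have hκ : 0 < κ := div_pos (mul_pos (by linarith) (by linarith)) hB0
  have hu0 : 0 < u := by linarith
  have hl : 1 < 2 * (B - 1) / B := by rw [lt_div_iff₀ hB0]; linarith
  have hr : ∀ n, B - 1 < r n := sub_one_lt_of_sub_one_lt (by linarith) hrec h0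
  obtain ⟨N, hlN, h2N⟩ := exists_pow_le_le_two_pow hl ((one_le_div hu0).2 huκ)
  have hrN : r N ≤ B - 1 + 2 * κ := by
    have hlNu : (2 * (B - 1) / B) ^ N * u ≤ κ := by rwa [le_div_iff₀ hu0] at hlN
    have := mul_le_mul_of_nonneg_left hu (pow_nonneg (zero_le_one.trans hl.le) N)
    linarith [sub_le_of_pow_mul_le hB hrec h0 (n := N) (by linarith)]
  have hc : 0 ≤ log (B - 1 + 2 * κ) := log_nonneg (by linarith)
  calc f ≤ log (r N) / 2 ^ N := le_div_two_pow_of_tendsto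
        (fun n => log_succ_le_two_mul_log (by linarith) hrec (by linarith [hr n])) hf N
    _ ≤ log (B - 1 + 2 * κ) / 2 ^ N :=
        div_le_div_of_nonneg_right (log_le_log (by linarith [hr N]) hrN) (by positivity)
    _ ≤ log (B - 1 + 2 * κ) / ((κ / u) ^ p / 2) :=
        div_le_div_of_nonneg_left hc (by positivity) (by linarith)
    _ = 2 * log (B - 1 + 2 * κ) * (u / κ) ^ p := by
        rw [← inv_div u κ, inv_rpow (by positivity)]; field_simp

end QuadraticRecursion

theorem exists_mul_rpow_le (B : ℝ) (hB : 2 < B) : ∃ c > 0, ∀ (r : ℕ → ℝ) (f x : ℝ),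
    (∀ n, r (n + 1) = (r n ^ 2 + (B - 1)) / B) → r 0 = (B - 1) * exp x → 0 < x → x ≤ 1 →
    Tendsto (fun n => log (r n) / 2 ^ n) atTop (𝓝 f) → c * x ^ logb (2 * (B - 1) / B) 2 ≤ f := by
  set p := logb (2 * (B - 1) / B) 2
  have hB0 : 0 < B := by linarith
  refine ⟨log ((2 * B - 1) / B) / 2 * ((B - 1) / B) ^ p, ?_, ?_⟩
  · exact mul_pos (half_pos (log_pos (by rw [one_lt_div hB0]; linarith)))
      (rpow_pos_of_pos (div_pos (by linarith) hB0) p)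
  intro r f x hrec hr0 hx0 hx1 hf
  have hd0 : (B - 1) * x ≤ r 0 - (B - 1) := by
    rw [hr0]; nlinarith [add_one_le_exp x]
  calc log ((2 * B - 1) / B) / 2 * ((B - 1) / B) ^ p * x ^ p
      = log ((2 * B - 1) / B) / 2 * ((B - 1) * x / B) ^ p := by
        rw [mul_assoc, ← mul_rpow (div_pos (by linarith) hB0).le hx0.le,
          div_mul_eq_mul_div (B - 1) B x]
    _ ≤ f := mul_rpow_le_of_tendsto hB hrec hf (by nlinarith) (by nlinarith) hd0

theorem exists_le_mul_rpow (B : ℝ) (hB : 2 < B) : ∃ c > 0, ∀ (r : ℕ → ℝ) (f x : ℝ),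
    (∀ n, r (n + 1) = (r n ^ 2 + (B - 1)) / B) → r 0 = (B - 1) * exp x → 0 < x → x ≤ 1 →
    Tendsto (fun n => log (r n) / 2 ^ n) atTop (𝓝 f) → f ≤ c * x ^ logb (2 * (B - 1) / B) 2 := by
  set κ := (B - 1) * (B - 2) / B
  set p := logb (2 * (B - 1) / B) 2
  have hB0 : 0 < B := by linarith
  have hκ : 0 < κ := div_pos (mul_pos (by linarith) (by linarith)) hB0
  have hp : 0 < p := logb_pos (by rw [lt_div_iff₀ hB0]; linarith) one_lt_two
  set M := max (2 * log (B - 1 + 2 * κ)) (log (B - 1) + 1)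
  have hM : 0 < M := lt_max_of_lt_right (by linarith [log_pos (by linarith : 1 < B - 1)])
  have hρ : 0 < 2 * (B - 1) / κ := div_pos (by linarith) hκ
  refine ⟨M * (2 * (B - 1) / κ) ^ p, mul_pos hM (rpow_pos_of_pos hρ p), ?_⟩
  intro r f x hrec hr0 hx0 hx1 hf
  have hscale : M * (2 * (B - 1) / κ) ^ p * x ^ p = M * (2 * (B - 1) * x / κ) ^ p := by
    rw [mul_assoc, ← mul_rpow hρ.le hx0.le, div_mul_eq_mul_div (2 * (B - 1)) κ x]
  rw [hscale]
  have h0 : B - 1 < r 0 := by rw [hr0]; nlinarith [add_one_lt_exp hx0.ne']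
  have hδ0 : r 0 - (B - 1) ≤ 2 * (B - 1) * x := by
    have hexp := le_of_abs_le (abs_exp_sub_one_le (x := x) (by rwa [abs_of_pos hx0]))
    rw [abs_of_pos hx0] at hexp
    rw [hr0]
    nlinarith
  rcases le_or_gt (2 * (B - 1) * x) κ with hsmall | hlarge
  · calc f ≤ 2 * log (B - 1 + 2 * κ) * (2 * (B - 1) * x / κ) ^ p :=
          le_mul_rpow_of_tendsto hB hrec hf h0 hδ0 hsmall
      _ ≤ M * (2 * (B - 1) * x / κ) ^ p :=
          mul_le_mul_of_nonneg_right (le_max_left _ _)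
            (rpow_nonneg (by rw [mul_div_right_comm]; exact mul_nonneg hρ.le hx0.le) p)
  · calc f ≤ log (r 0) / 2 ^ 0 := le_div_two_pow_of_tendsto
          (fun n => log_succ_le_two_mul_log (by linarith) hrec
            (by linarith [sub_one_lt_of_sub_one_lt (by linarith) hrec h0 n])) hf 0
      _ ≤ M := by
          rw [pow_zero, div_one, hr0, log_mul (by linarith) (exp_pos x).ne', log_exp]
          exact (add_le_add_right hx1 _).trans (le_max_right _ _)
      _ ≤ M * (2 * (B - 1) * x / κ) ^ p :=
          le_mul_of_one_le_right hM.le (one_le_rpow ((one_lt_div hκ).2 hlarge).le hp.le)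

/-- Critical behavior of the annealed free energy: there is `c = c(B) > 0` such that
for all `h ∈ (h_c, h_c + 1)`, `c⁻¹ (h - h_c)^{1/α} ≤ F(0,h) ≤ c (h - h_c)^{1/α}`,
where `h_c = log (B-1)` and `α = log (2(B-1)/B) / log 2`. -/
theorem stmt13 (B : ℝ) (hB : 2 < B) (r : ℝ → ℕ → ℝ)
    (hr0 : ∀ h, r h 0 = Real.exp h)
    (hrec : ∀ h n, r h (n + 1) = ((r h n) ^ 2 + (B - 1)) / B)
    (F : ℝ → ℝ)
    (hF : ∀ h, Tendsto (fun n => Real.log (r h n) / 2 ^ n) atTop (𝓝 (F h))) :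
    ∃ c : ℝ, 0 < c ∧ ∀ h : ℝ, Real.log (B - 1) < h → h < Real.log (B - 1) + 1 →
      c⁻¹ * (h - Real.log (B - 1)) ^ ((Real.log (2 * (B - 1) / B) / Real.log 2)⁻¹) ≤ F h ∧
      F h ≤ c * (h - Real.log (B - 1)) ^ ((Real.log (2 * (B - 1) / B) / Real.log 2)⁻¹) := by
  obtain ⟨c₁, hc₁, hlower⟩ := exists_mul_rpow_le B hB
  obtain ⟨c₂, hc₂, hupper⟩ := exists_le_mul_rpow B hB
  refine ⟨max c₁⁻¹ c₂, lt_max_of_lt_right hc₂, fun h hh₁ hh₂ => ?_⟩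
  have hr0' : r h 0 = (B - 1) * exp (h - log (B - 1)) := by
    rw [hr0, exp_sub, exp_log (by linarith), mul_div_cancel₀ _ (by linarith : 0 < B - 1).ne']
  have hx : 0 ≤ (h - log (B - 1)) ^ logb (2 * (B - 1) / B) 2 := rpow_nonneg (by linarith) _
  rw [inv_div, ← logb]
  constructor
  · calc (max c₁⁻¹ c₂)⁻¹ * (h - log (B - 1)) ^ logb (2 * (B - 1) / B) 2
        ≤ c₁ * (h - log (B - 1)) ^ logb (2 * (B - 1) / B) 2 :=
          mul_le_mul_of_nonneg_right (inv_le_of_inv_le₀ hc₁ (le_max_left _ _)) hx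
      _ ≤ F h := hlower (r h) (F h) _ (hrec h) hr0' (by linarith) (by linarith) (hF h)
  · calc F h ≤ c₂ * (h - log (B - 1)) ^ logb (2 * (B - 1) / B) 2 :=
          hupper (r h) (F h) _ (hrec h) hr0' (by linarith) (by linarith) (hF h)
      _ ≤ _ := mul_le_mul_of_nonneg_right (le_max_right _ _) hx
end

section
/- Let b_{n+1} = f(b_n) with f(x) = sqrt(Bx + (B-1)^2) - (B-1) and b_0 = b ∈ (-(B-2), 0). Then b_n < 0 for all n, b_n → 0, and there exists H_b > 0 with b_n ~ -H_b (B/(2(B-1)))^n as n → ∞; moreover H_b ~ |b| as b → 0. -/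
open Filter Topology Set

/-!
With `s = √(B y + (B - 1)²)`, one step is `y ↦ q(y) y` where `q(y) = B / (s + B - 1) ∈ (0, 1)`
decreases in `y`, so the orbit of `x < 0` increases to `0` with `|b n| ≤ |x| q(x)ⁿ`.
Against `r = B / (2 (B - 1))`, the rescaled orbit `-b n / rⁿ` is multiplied at each step by
`q(b n) / r ∈ [1, 1 + |b n| / B]`; hence it increases and stays below
`|x| ∏ (1 + |x| q(x)ᵏ / B) ≤ |x| exp (|x| / (B (1 - q(x))))`.
As `q` stays away from `1` near `0`, its limit `H x` lies between `|x|` and `|x| (1 + O(|x|))`.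
-/

lemma le_mul_exp_of_le_mul_one_add_geom {u : ℕ → ℝ} {ε q : ℝ} (hu : ∀ n, 0 ≤ u n)
    (hε : 0 ≤ ε) (hq0 : 0 ≤ q) (hq1 : q < 1)
    (hstep : ∀ n, u (n + 1) ≤ u n * (1 + ε * q ^ n)) (n : ℕ) : u n ≤ u 0 * Real.exp (ε / (1 - q)) := by
  have hpartial : ∀ n, u n ≤ u 0 * Real.exp (ε * ∑ k ∈ Finset.range n, q ^ k) := by
    intro n
    induction n with
    | zero => simp
    | succ n ih =>
      calc u (n + 1) ≤ u n * (1 + ε * q ^ n) := hstep n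
        _ ≤ u 0 * Real.exp (ε * ∑ k ∈ Finset.range n, q ^ k) * Real.exp (ε * q ^ n) := by
          refine mul_le_mul ih ?_ (add_nonneg zero_le_one (mul_nonneg hε (pow_nonneg hq0 n)))
            (mul_nonneg (hu 0) (Real.exp_nonneg _))
          linarith [Real.add_one_le_exp (ε * q ^ n)]
        _ = u 0 * Real.exp (ε * ∑ k ∈ Finset.range (n + 1), q ^ k) := by
          rw [mul_assoc, ← Real.exp_add, Finset.sum_range_succ, mul_add]
  have geom : ∑ k ∈ Finset.range n, q ^ k ≤ 1 / (1 - q) := by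
    simpa only [Finset.range_eq_Ico, pow_zero] using
      geom_sum_Ico_le_of_lt_one (m := 0) (n := n) hq0 hq1
  calc u n ≤ u 0 * Real.exp (ε * ∑ k ∈ Finset.range n, q ^ k) := hpartial n
    _ ≤ u 0 * Real.exp (ε / (1 - q)) := by
      have := hu 0
      gcongr
      rw [div_eq_mul_one_div]
      exact mul_le_mul_of_nonneg_left geom hε

namespace SqrtRecursion

variable {B x x₀ y : ℝ}

noncomputable def step (B y : ℝ) : ℝ := √(B * y + (B - 1) ^ 2) - (B - 1)

noncomputable def contraction (B y : ℝ) : ℝ := B / (√(B * y + (B - 1) ^ 2) + (B - 1))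

lemma one_lt_radicand (hB : 0 < B) (hy : -(B - 2) < y) : 1 < B * y + (B - 1) ^ 2 := by
  nlinarith

lemma one_lt_sqrt (hB : 0 < B) (hy : -(B - 2) < y) : 1 < √(B * y + (B - 1) ^ 2) :=
  Real.lt_sqrt_of_sq_lt (by linarith [one_lt_radicand hB hy])

lemma sqrt_lt (hB : 1 < B) (hy : y < 0) : √(B * y + (B - 1) ^ 2) < B - 1 :=
  (Real.sqrt_lt' (by linarith)).mpr (by nlinarith)

lemma contraction_pos (hB : 1 < B) : 0 < contraction B y :=
  div_pos (by linarith) (by positivity)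

lemma contraction_lt_one (hB : 0 < B) (hy : -(B - 2) < y) : contraction B y < 1 := by
  have := one_lt_sqrt hB hy
  rw [contraction, div_lt_one (by linarith)]
  linarith

lemma contraction_anti (hB : 1 < B) (hxy : x ≤ y) : contraction B y ≤ contraction B x := by
  unfold contraction
  gcongr

lemma step_eq_contraction_mul (hB : 1 < B) (hy : -(B - 2) < y) :
    step B y = contraction B y * y := by
  have hs := one_lt_sqrt (by linarith) hy
  have hsq := Real.sq_sqrt (zero_le_one.trans (one_lt_radicand (by linarith) hy).le)
  rw [step, contraction, div_mul_eq_mul_div, eq_div_iff (by linarith)]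
  linear_combination hsq

lemma mapsTo_step (hB : 1 < B) : MapsTo (step B) (Ioo (-(B - 2)) 0) (Ioo (-(B - 2)) 0) := by
  rintro y ⟨hy₁, hy₂⟩
  have hq₀ := contraction_pos (y := y) hB
  have hq₁ := contraction_lt_one (by linarith) hy₁
  rw [step_eq_contraction_mul hB hy₁]
  constructor <;> nlinarith

lemma div_le_contraction (hB : 1 < B) (hy : y < 0) : B / (2 * (B - 1)) ≤ contraction B y := by
  have := sqrt_lt hB hy
  unfold contraction
  gcongr
  linarith

lemma contraction_le (hB : 1 < B) (hy : y ∈ Ioo (-(B - 2)) 0) :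
    contraction B y ≤ B / (2 * (B - 1)) * (1 + -y / B) := by
  have hs₁ := one_lt_sqrt (by linarith) hy.1
  have hs₂ := sqrt_lt hB hy.2
  have hsq := Real.sq_sqrt (zero_le_one.trans (one_lt_radicand (by linarith) hy.1).le)
  set s := √(B * y + (B - 1) ^ 2)
  rw [contraction, div_le_iff₀ (by linarith),
    show B / (2 * (B - 1)) * (1 + -y / B) * (s + (B - 1))
      = (B - y) * (s + (B - 1)) / (2 * (B - 1)) by field_simp; ring,
    le_div_iff₀ (by linarith)]
  -- with `t = s + (B - 1)` and `B y = s² - (B - 1)²`, this is `(2 (B - 1) - t) (t² - B²) ≥ 0`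
  nlinarith [mul_nonneg (sub_nonneg.mpr hs₂.le)
    (by nlinarith : (0 : ℝ) ≤ (s + (B - 1)) ^ 2 - B ^ 2)]

lemma le_step (hB : 1 < B) (hy : y ∈ Ioo (-(B - 2)) 0) : y ≤ step B y := by
  have := contraction_lt_one (by linarith) hy.1
  rw [step_eq_contraction_mul hB hy.1]
  nlinarith [hy.2]

lemma iterate_mem (hB : 1 < B) (hx : x ∈ Ioo (-(B - 2)) 0) (n : ℕ) :
    (step B)^[n] x ∈ Ioo (-(B - 2)) 0 :=
  (mapsTo_step hB).iterate n hx

lemma monotone_iterate (hB : 1 < B) (hx : x ∈ Ioo (-(B - 2)) 0) :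
    Monotone fun n ↦ (step B)^[n] x :=
  monotone_nat_of_le_succ fun n ↦ by
    simpa only [Function.iterate_succ_apply'] using le_step hB (iterate_mem hB hx n)

lemma neg_iterate_le (hB : 1 < B) (hx : x ∈ Ioo (-(B - 2)) 0) (n : ℕ) :
    -(step B)^[n] x ≤ -x * contraction B x ^ n := by
  induction n with
  | zero => simp
  | succ n ih =>
    have ha := iterate_mem hB hx n
    have hq : contraction B ((step B)^[n] x) ≤ contraction B x :=
      contraction_anti hB (monotone_iterate hB hx n.zero_le)
    rw [Function.iterate_succ_apply', step_eq_contraction_mul hB ha.1, pow_succ]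
    nlinarith [contraction_pos (y := (step B)^[n] x) hB, contraction_pos (y := x) hB, ha.2]

lemma tendsto_iterate (hB : 1 < B) (hx : x ∈ Ioo (-(B - 2)) 0) :
    Tendsto (fun n ↦ (step B)^[n] x) atTop (𝓝 0) := by
  have hgeom : Tendsto (fun n ↦ x * contraction B x ^ n) atTop (𝓝 0) := by
    simpa using (tendsto_pow_atTop_nhds_zero_of_lt_one (contraction_pos hB).le
      (contraction_lt_one (by linarith) hx.1)).const_mul x
  refine tendsto_of_tendsto_of_tendsto_of_le_of_le hgeom tendsto_const_nhds (fun n ↦ ?_)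
    (fun n ↦ (iterate_mem hB hx n).2.le)
  linarith [neg_iterate_le hB hx n]

noncomputable def rescaled (B x : ℝ) (n : ℕ) : ℝ := -(step B)^[n] x / (B / (2 * (B - 1))) ^ n

lemma rescaled_succ (hB : 1 < B) (hx : x ∈ Ioo (-(B - 2)) 0) (n : ℕ) :
    rescaled B x (n + 1) =
      rescaled B x n * (contraction B ((step B)^[n] x) / (B / (2 * (B - 1)))) := by
  rw [rescaled, rescaled, Function.iterate_succ_apply',
    step_eq_contraction_mul hB (iterate_mem hB hx n).1, pow_succ]
  ring

lemma rescaled_nonneg (hB : 1 < B) (hx : x ∈ Ioo (-(B - 2)) 0) (n : ℕ) : 0 ≤ rescaled B x n :=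
  div_nonneg (by linarith [(iterate_mem hB hx n).2]) (by positivity)

lemma monotone_rescaled (hB : 1 < B) (hx : x ∈ Ioo (-(B - 2)) 0) : Monotone (rescaled B x) :=
  monotone_nat_of_le_succ fun n ↦ by
    rw [rescaled_succ hB hx]
    refine le_mul_of_one_le_right (rescaled_nonneg hB hx n) ?_
    rw [one_le_div (by positivity)]
    exact div_le_contraction hB (iterate_mem hB hx n).2

lemma rescaled_succ_le (hB : 1 < B) (hx : x ∈ Ioo (-(B - 2)) 0) (hx₀x : x₀ ≤ x) (n : ℕ) :
    rescaled B x (n + 1) ≤ rescaled B x n * (1 + -x / B * contraction B x₀ ^ n) := by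
  have ha := iterate_mem hB hx n
  have hdecay : -(step B)^[n] x / B ≤ -x / B * contraction B x₀ ^ n :=
    calc -(step B)^[n] x / B ≤ -x * contraction B x ^ n / B := by
          gcongr
          exact neg_iterate_le hB hx n
      _ ≤ -x / B * contraction B x₀ ^ n := by
          rw [div_mul_eq_mul_div]
          gcongr
          · linarith [hx.2]
          · exact (contraction_pos hB).le
          · exact contraction_anti hB hx₀x
  rw [rescaled_succ hB hx]
  gcongr ?_ * ?_
  · exact rescaled_nonneg hB hx n
  rw [div_le_iff₀ (by positivity), mul_comm]
  exact (contraction_le hB ha).trans (by gcongr)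

lemma rescaled_le (hB : 1 < B) (hx₀ : -(B - 2) < x₀) (hx : x ∈ Ioo (-(B - 2)) 0)
    (hx₀x : x₀ ≤ x) (n : ℕ) :
    rescaled B x n ≤ -x * Real.exp (-x / B / (1 - contraction B x₀)) := by
  have h0 : rescaled B x 0 = -x := by simp [rescaled]
  have := le_mul_exp_of_le_mul_one_add_geom (rescaled_nonneg hB hx)
    (div_nonneg (by linarith [hx.2]) (by linarith)) (contraction_pos hB).le
    (contraction_lt_one (by linarith) hx₀) (rescaled_succ_le hB hx hx₀x) n
  rwa [h0] at this

noncomputable def decayConst (B x : ℝ) : ℝ := ⨆ n, rescaled B x n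

lemma bddAbove_rescaled (hB : 1 < B) (hx : x ∈ Ioo (-(B - 2)) 0) :
    BddAbove (range (rescaled B x)) :=
  ⟨_, forall_mem_range.mpr (rescaled_le hB hx.1 hx le_rfl)⟩

lemma tendsto_rescaled (hB : 1 < B) (hx : x ∈ Ioo (-(B - 2)) 0) :
    Tendsto (rescaled B x) atTop (𝓝 (decayConst B x)) :=
  tendsto_atTop_ciSup (monotone_rescaled hB hx) (bddAbove_rescaled hB hx)

lemma neg_le_decayConst (hB : 1 < B) (hx : x ∈ Ioo (-(B - 2)) 0) : -x ≤ decayConst B x := by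
  calc -x = rescaled B x 0 := by simp [rescaled]
    _ ≤ decayConst B x := le_ciSup (bddAbove_rescaled hB hx) 0

lemma decayConst_le (hB : 1 < B) (hx₀ : -(B - 2) < x₀) (hx : x ∈ Ioo (-(B - 2)) 0)
    (hx₀x : x₀ ≤ x) : decayConst B x ≤ -x * Real.exp (-x / B / (1 - contraction B x₀)) :=
  ciSup_le (rescaled_le hB hx₀ hx hx₀x)

lemma tendsto_decayConst_div_abs (hB : 2 < B) :
    Tendsto (fun x ↦ decayConst B x / |x|) (𝓝[Ioo (-(B - 2)) 0] 0) (𝓝 1) := by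
  have hB1 : 1 < B := by linarith
  obtain ⟨x₀, hx₀, hx₀0⟩ : ∃ x₀, -(B - 2) < x₀ ∧ x₀ < 0 :=
    ⟨-(B - 2) / 2, by linarith, by linarith⟩
  have hexp : Tendsto (fun x ↦ Real.exp (-x / B / (1 - contraction B x₀)))
      (𝓝[Ioo (-(B - 2)) 0] 0) (𝓝 1) := by
    have : Continuous fun x ↦ Real.exp (-x / B / (1 - contraction B x₀)) := by fun_prop
    simpa using (this.tendsto 0).mono_left nhdsWithin_le_nhds
  have hnear : ∀ᶠ x in 𝓝[Ioo (-(B - 2)) 0] 0, x₀ ≤ x :=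
    eventually_nhdsWithin_of_eventually_nhds (eventually_ge_nhds hx₀0)
  refine tendsto_of_tendsto_of_tendsto_of_le_of_le' tendsto_const_nhds hexp ?_ ?_
  · filter_upwards [self_mem_nhdsWithin] with x hx
    rw [abs_of_neg hx.2, le_div_iff₀ (by linarith [hx.2]), one_mul]
    exact neg_le_decayConst hB1 hx
  · filter_upwards [self_mem_nhdsWithin, hnear] with x hx hx₀x
    rw [abs_of_neg hx.2, div_le_iff₀ (by linarith [hx.2]), mul_comm]
    exact decayConst_le hB1 hx₀ hx hx₀x

end SqrtRecursion

open SqrtRecursion in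
/-- For the recursion `b (n+1) = sqrt (B * b n + (B-1)^2) - (B-1)` with initial value
`x ∈ (-(B-2), 0)`: `b n < 0` for all `n`, `b n → 0`, and there is `H x > 0` with
`b n / (B/(2(B-1)))^n → -H x`; moreover `H x / |x| → 1` as `x → 0⁻`. -/
theorem stmt15 (B : ℝ) (hB : 2 < B) (b : ℝ → ℕ → ℝ)
    (hb0 : ∀ x, b x 0 = x)
    (hbrec : ∀ x n, b x (n + 1) = Real.sqrt (B * b x n + (B - 1) ^ 2) - (B - 1)) :
    ∃ H : ℝ → ℝ,
      (∀ x ∈ Set.Ioo (-(B - 2)) (0 : ℝ),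
        0 < H x ∧ (∀ n, b x n < 0) ∧ Tendsto (b x) atTop (𝓝 0) ∧
        Tendsto (fun n => b x n / (B / (2 * (B - 1))) ^ n) atTop (𝓝 (-H x))) ∧
      Tendsto (fun x => H x / |x|) (𝓝[Set.Ioo (-(B - 2)) (0 : ℝ)] 0) (𝓝 1) := by
  have hB1 : 1 < B := by linarith
  have horbit : b = fun x n ↦ (step B)^[n] x := by
    funext x n
    induction n with
    | zero => exact hb0 x
    | succ n ih => rw [hbrec, ih, Function.iterate_succ_apply']; rfl
  subst horbit
  refine ⟨decayConst B, fun x hx ↦ ⟨?_, fun n ↦ (iterate_mem hB1 hx n).2,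
    tendsto_iterate hB1 hx, ?_⟩, tendsto_decayConst_div_abs hB⟩
  · linarith [neg_le_decayConst hB1 hx, hx.2]
  · simpa [rescaled, neg_div] using (tendsto_rescaled hB1 hx).neg
end

section
/- Suppose 2 < B < 2+√2 and the initial normalized variance Q_0 < (B/(B-1))^2 - 2. Then there exists δ_0 > 0 with 2(1+δ_0)((B-1)/B)^2 < 1 such that, as long as P_n ≤ δ_0 B(B-1)/4, the sequence Q_n satisfies Q_{n+1} ≤ 2((B-1)/B)^2 (1+δ_0)(Q_n + Q_n^2/2) and hence decays exponentially: Q_n ≤ c_1 (2(1+δ_0)((B-1)/B)^2)^n Q_0 for some c_1 = c_1(B, Q_0). -/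
/-!
Under the smallness assumption on `P` the recursion gives `Q (n+1) ≤ ρ (Q n + Q n ^ 2 / 2)` with
`ρ = 2 (1 + δ₀) ((B-1)/B)^2`. A first induction shows that `Q n ≤ σ ^ n Q 0` with
`σ = ρ (1 + Q 0 / 2)`; the assumption `Q 0 < (B/(B-1))^2 - 2` says precisely that `σ < 1` at
`δ₀ = 0`, so `σ < 1` for small `δ₀`.
Feeding this back, `Q (n+1) ≤ ρ (1 + σ ^ n Q 0 / 2) Q n`, and the product of the correction
factors `1 + σ ^ j Q 0 / 2` is bounded by `exp (Q 0 / 2 / (1 - σ))`, so `Q` decays at the pure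
rate `ρ`.
-/

open Finset Real

lemma add_sq_div_two_le_mul {x a : ℝ} (hx : 0 ≤ x) (hxa : x ≤ a) :
    x + x ^ 2 / 2 ≤ (1 + a / 2) * x := by
  nlinarith

lemma prod_one_add_pow_mul_le_exp {σ a : ℝ} (hσ₀ : 0 ≤ σ) (hσ₁ : σ < 1) (ha : 0 ≤ a)
    (n : ℕ) :
    ∏ j ∈ range n, (1 + σ ^ j * a) ≤ exp (a / (1 - σ)) := by
  have hgeom : ∑ j ∈ range n, σ ^ j ≤ 1 / (1 - σ) := by
    have := geom_sum_Ico_le_of_lt_one (m := 0) (n := n) hσ₀ hσ₁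
    rwa [← range_eq_Ico, pow_zero] at this
  calc ∏ j ∈ range n, (1 + σ ^ j * a)
      ≤ exp (∑ j ∈ range n, σ ^ j * a) :=
        prod_one_add_le_exp_sum _ fun j ↦ mul_nonneg (pow_nonneg hσ₀ j) ha
    _ ≤ exp (a / (1 - σ)) := by
        rw [← sum_mul, div_eq_mul_one_div, mul_comm a]
        gcongr

section QuadraticRecursion

variable {q : ℕ → ℝ} {ρ : ℝ} {n : ℕ}

lemma le_pow_mul_of_le_mul_add_sq (hq : ∀ k, 0 ≤ q k) (hρ : 0 ≤ ρ)
    (hσ : ρ * (1 + q 0 / 2) ≤ 1) (hstep : ∀ k < n, q (k + 1) ≤ ρ * (q k + q k ^ 2 / 2)) :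
    q n ≤ (ρ * (1 + q 0 / 2)) ^ n * q 0 := by
  have hq₀ : 0 ≤ q 0 := hq 0
  induction n with
  | zero => simp
  | succ k ih =>
    have hk : q k ≤ (ρ * (1 + q 0 / 2)) ^ k * q 0 := ih fun j hj ↦ hstep j (by omega)
    have hk0 : q k ≤ q 0 :=
      hk.trans (mul_le_of_le_one_left hq₀ (pow_le_one₀ (by positivity) hσ))
    calc q (k + 1) ≤ ρ * (q k + q k ^ 2 / 2) := hstep k k.lt_succ_self
      _ ≤ ρ * ((1 + q 0 / 2) * q k) := by gcongr; exact add_sq_div_two_le_mul (hq k) hk0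
      _ ≤ ρ * ((1 + q 0 / 2) * ((ρ * (1 + q 0 / 2)) ^ k * q 0)) := by gcongr
      _ = (ρ * (1 + q 0 / 2)) ^ (k + 1) * q 0 := by ring

lemma le_prod_mul_pow_mul_of_le_mul_add_sq (hq : ∀ k, 0 ≤ q k) (hρ : 0 ≤ ρ)
    (hσ : ρ * (1 + q 0 / 2) ≤ 1) (hstep : ∀ k < n, q (k + 1) ≤ ρ * (q k + q k ^ 2 / 2)) :
    q n ≤ (∏ j ∈ range n, (1 + (ρ * (1 + q 0 / 2)) ^ j * (q 0 / 2))) * ρ ^ n * q 0 := by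
  have hq₀ : 0 ≤ q 0 := hq 0
  induction n with
  | zero => simp
  | succ k ih =>
    have hstep' : ∀ j < k, q (j + 1) ≤ ρ * (q j + q j ^ 2 / 2) :=
      fun j hj ↦ hstep j (by omega)
    have hk := le_pow_mul_of_le_mul_add_sq hq hρ hσ hstep'
    calc q (k + 1) ≤ ρ * (q k + q k ^ 2 / 2) := hstep k k.lt_succ_self
      _ ≤ ρ * ((1 + (ρ * (1 + q 0 / 2)) ^ k * (q 0 / 2)) * q k) := by
          gcongr
          exact (add_sq_div_two_le_mul (hq k) hk).trans_eq (by ring)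
      _ ≤ ρ * ((1 + (ρ * (1 + q 0 / 2)) ^ k * (q 0 / 2)) *
            ((∏ j ∈ range k, (1 + (ρ * (1 + q 0 / 2)) ^ j * (q 0 / 2))) * ρ ^ k * q 0)) := by
          gcongr; exact ih hstep'
      _ = _ := by rw [prod_range_succ]; ring

theorem le_exp_mul_pow_mul_of_le_mul_add_sq (hq : ∀ k, 0 ≤ q k) (hρ : 0 ≤ ρ)
    (hσ : ρ * (1 + q 0 / 2) < 1) (hstep : ∀ k < n, q (k + 1) ≤ ρ * (q k + q k ^ 2 / 2)) :
    q n ≤ exp (q 0 / 2 / (1 - ρ * (1 + q 0 / 2))) * ρ ^ n * q 0 := by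
  have hq₀ : 0 ≤ q 0 := hq 0
  calc q n ≤ (∏ j ∈ range n, (1 + (ρ * (1 + q 0 / 2)) ^ j * (q 0 / 2))) * ρ ^ n * q 0 :=
        le_prod_mul_pow_mul_of_le_mul_add_sq hq hρ hσ.le hstep
    _ ≤ exp (q 0 / 2 / (1 - ρ * (1 + q 0 / 2))) * ρ ^ n * q 0 := by
        gcongr
        exact prod_one_add_pow_mul_le_exp (by positivity) hσ (by positivity) n

end QuadraticRecursion

lemma two_mul_sq_sub_one_div_mul_lt_one {B x : ℝ} (hB : 1 < B)
    (hx : x < (B / (B - 1)) ^ 2 - 2) : 2 * ((B - 1) / B) ^ 2 * (1 + x / 2) < 1 := by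
  have hB0 : B ≠ 0 := by positivity
  have hB1 : B - 1 ≠ 0 := sub_ne_zero.2 hB.ne'
  calc 2 * ((B - 1) / B) ^ 2 * (1 + x / 2) = ((B - 1) / B) ^ 2 * (x + 2) := by ring
    _ < ((B - 1) / B) ^ 2 * (B / (B - 1)) ^ 2 := by gcongr; linarith
    _ = 1 := by field_simp

theorem stmt18_general (B : ℝ) (hB : 2 < B)
    (Q P E : ℕ → ℝ)
    (hQ0 : Q 0 < (B / (B - 1)) ^ 2 - 2)
    (hQnn : ∀ n, 0 ≤ Q n)
    (hE : ∀ n, E n ≤ 1 + 4 * P n / (B * (B - 1)))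
    (hrec : ∀ n, Q (n + 1) = E n * (2 * ((B - 1) / B) ^ 2) * (Q n + Q n ^ 2 / 2)) :
    ∃ δ0 : ℝ, 0 < δ0 ∧ 2 * (1 + δ0) * ((B - 1) / B) ^ 2 < 1 ∧
      ∃ c1 : ℝ, 0 < c1 ∧ ∀ n, (∀ m ≤ n, P m ≤ δ0 * B * (B - 1) / 4) →
        Q (n + 1) ≤ 2 * ((B - 1) / B) ^ 2 * (1 + δ0) * (Q n + Q n ^ 2 / 2) ∧
        Q n ≤ c1 * (2 * (1 + δ0) * ((B - 1) / B) ^ 2) ^ n * Q 0 := by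
  have hQ0nn := hQnn 0
  have hB1 : 0 < B - 1 := by linarith
  have hs : 2 * ((B - 1) / B) ^ 2 * (1 + Q 0 / 2) < 1 :=
    two_mul_sq_sub_one_div_mul_lt_one (by linarith) hQ0
  obtain ⟨δ0, hδ0, hσ⟩ :
      ∃ δ0 > 0, 2 * (1 + δ0) * ((B - 1) / B) ^ 2 * (1 + Q 0 / 2) < 1 := by
    obtain ⟨a, ha, has⟩ := exists_between (one_lt_one_div (by positivity) hs)
    exact ⟨a - 1, by linarith, by linear_combination (lt_div_iff₀ (by positivity)).1 has⟩
  have hstep : ∀ n, P n ≤ δ0 * B * (B - 1) / 4 →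
      Q (n + 1) ≤ 2 * ((B - 1) / B) ^ 2 * (1 + δ0) * (Q n + Q n ^ 2 / 2) := by
    intro n hP
    have hEn : E n ≤ 1 + δ0 := by
      have : 4 * P n / (B * (B - 1)) ≤ δ0 := by rw [div_le_iff₀ (by positivity)]; linarith
      linarith [hE n]
    rw [hrec n, mul_comm (E n)]
    have := hQnn n
    gcongr
  have hρ : 2 * (1 + δ0) * ((B - 1) / B) ^ 2 < 1 :=
    (le_mul_of_one_le_right (by positivity) (by linarith)).trans_lt hσ
  set σ := 2 * (1 + δ0) * ((B - 1) / B) ^ 2 * (1 + Q 0 / 2)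
  refine ⟨δ0, hδ0, hρ, exp (Q 0 / 2 / (1 - σ)), exp_pos _,
    fun n hP ↦ ⟨hstep n (hP n le_rfl), ?_⟩⟩
  refine le_exp_mul_pow_mul_of_le_mul_add_sq hQnn (by positivity) hσ fun k hk ↦ ?_
  linarith [hstep k (hP k hk.le)]

/-- Irrelevant-disorder regime `2 < B < 2 + √2`: if the initial normalized variance
satisfies `Q 0 < (B/(B-1))^2 - 2`, then there exists `δ0 > 0` with
`2(1+δ0)((B-1)/B)^2 < 1` such that, as long as `P m ≤ δ0 B (B-1)/4`, one has
`Q (n+1) ≤ 2((B-1)/B)^2 (1+δ0)(Q n + Q n^2/2)`, and hence `Q` decays exponentially: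
`Q n ≤ c1 (2(1+δ0)((B-1)/B)^2)^n Q 0` for some `c1 > 0`. Here `Q` satisfies
`Q (n+1) = E n · 2((B-1)/B)^2 · (Q n + Q n^2/2)` with
`E n ≤ 1 + 4 P n/(B(B-1))`. -/
theorem stmt18 (B : ℝ) (hB : 2 < B) (hB2 : B < 2 + Real.sqrt 2)
    (Q P E : ℕ → ℝ)
    (hQ0 : Q 0 < (B / (B - 1)) ^ 2 - 2)
    (hQnn : ∀ n, 0 ≤ Q n) (hPnn : ∀ n, 0 ≤ P n)
    (hE : ∀ n, E n ≤ 1 + 4 * P n / (B * (B - 1)))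
    (hrec : ∀ n, Q (n + 1) = E n * (2 * ((B - 1) / B) ^ 2) * (Q n + Q n ^ 2 / 2)) :
    ∃ δ0 : ℝ, 0 < δ0 ∧ 2 * (1 + δ0) * ((B - 1) / B) ^ 2 < 1 ∧
      ∃ c1 : ℝ, 0 < c1 ∧ ∀ n, (∀ m ≤ n, P m ≤ δ0 * B * (B - 1) / 4) →
        Q (n + 1) ≤ 2 * ((B - 1) / B) ^ 2 * (1 + δ0) * (Q n + Q n ^ 2 / 2) ∧
        Q n ≤ c1 * (2 * (1 + δ0) * ((B - 1) / B) ^ 2) ^ n * Q 0 :=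
  stmt18_general B hB Q P E hQ0 hQnn hE hrec
end

section
/- If ω has law P and P̃ is the exponentially tilted law dP̃/dP = exp(-λ Σ_{i=1}^N ω_i)/M(-λ)^N with λ = δ/√N, then there exists C > 1 (depending only on the law of ω_1) such that for a ∈ (0,1) and δ ∈ (0, a/C): P̃(dP/dP̃ < e^{-a}) ≤ C (δ/a)^2. -/
/-!
Since `M(-λ) ≥ 1` (Jensen, as `E ω = 0`), the event `dP/dP̃ < e^{-a}` forces `λ S_N < -a`.
Under `P̃` the `ω_i` are again i.i.d., with mean `m = E[ω e^{-λω}] / M(-λ) = O(λ)`, so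
`λ N m = O(δ²) ≤ a/2` and the event lies in `{|λ (S_N - N m)| ≥ a/2}`. Chebyshev under `P̃`
bounds this by `4 λ² N Var_P̃(ω) / a² = 4 δ² Var_P̃(ω) / a²`, and for `λ ≤ 1` the tilted variance
is at most `K = E[ω² e^{|ω|}]`, which gives `C = 4K + 2`.
-/

open MeasureTheory ProbabilityTheory Real Finset

lemma abs_exp_sub_one_le_abs_mul_exp_abs (y : ℝ) : |exp y - 1| ≤ |y| * exp |y| := by
  rcases le_or_gt 0 y with hy | hy
  · have h : 1 - y ≤ exp (-y) := one_sub_le_exp_neg y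
    rw [abs_of_nonneg hy, abs_of_nonneg (by linarith [add_one_le_exp y])]
    have : (1 - y) * exp y ≤ 1 := by
      simpa [← exp_add] using mul_le_mul_of_nonneg_right h (exp_pos y).le
    linarith
  · rw [abs_of_neg hy, abs_of_nonpos (by linarith [exp_lt_one_iff.2 hy])]
    nlinarith [add_one_le_exp y, one_le_exp (neg_nonneg.2 hy.le)]

lemma abs_mul_exp_mul_sub_one_le {t : ℝ} (ht : |t| ≤ 1) (u : ℝ) :
    |u * (exp (t * u) - 1)| ≤ |t| * (u ^ 2 * exp |u|) := by
  have htu : |t * u| ≤ |u| := by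
    rw [abs_mul]; exact mul_le_of_le_one_left (abs_nonneg u) ht
  calc |u * (exp (t * u) - 1)| ≤ |u| * (|t * u| * exp |t * u|) := by
        rw [abs_mul]; gcongr; exact abs_exp_sub_one_le_abs_mul_exp_abs _
    _ ≤ |u| * (|t| * |u| * exp |u|) := by rw [abs_mul t u]; gcongr; rwa [← abs_mul]
    _ = |t| * (u ^ 2 * exp |u|) := by rw [← sq_abs u]; ring

lemma exp_mul_le_exp_abs {t : ℝ} (ht : |t| ≤ 1) (u : ℝ) : exp (t * u) ≤ exp |u| :=
  exp_le_exp.2 <| (le_abs_self _).trans <| by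
    rw [abs_mul]; exact mul_le_of_le_one_left (abs_nonneg u) ht

namespace ProbabilityTheory

variable {Ω ι : Type*} [MeasurableSpace Ω] {μ : Measure Ω} {Y : ι → Ω → ℝ}

lemma iIndepFun.integral_finsetProd (hY : iIndepFun Y μ)
    (hYm : ∀ i, AEStronglyMeasurable (Y i) μ) (s : Finset ι) :
    ∫ x, ∏ i ∈ s, Y i x ∂μ = ∏ i ∈ s, ∫ x, Y i x ∂μ := by
  calc ∫ x, ∏ i ∈ s, Y i x ∂μ = ∫ x, ∏ i : s, Y i x ∂μ :=
      integral_congr_ae <| ae_of_all _ fun x => (prod_coe_sort s fun i => Y i x).symm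
    _ = ∏ i : s, ∫ x, Y i x ∂μ :=
      (hY.precomp Subtype.val_injective).integral_fun_prod_eq_prod_integral fun i => hYm i
    _ = ∏ i ∈ s, ∫ x, Y i x ∂μ := prod_coe_sort s fun i => ∫ x, Y i x ∂μ

lemma iIndepFun.integrable_finsetProd (hY : iIndepFun Y μ) (hYm : ∀ i, Measurable (Y i))
    {s : Finset ι} (hYi : ∀ i ∈ s, Integrable (Y i) μ) :
    Integrable (fun x => ∏ i ∈ s, Y i x) μ := by
  classical
  induction s using Finset.induction_on with
  | empty => have := hY.isProbabilityMeasure; simp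
  | insert a s ha ih =>
    have hind : IndepFun (fun x => ∏ j ∈ s, Y j x) (Y a) μ := by
      simpa only [prod_fn] using hY.indepFun_finsetProd_of_notMem hYm ha
    simp_rw [prod_insert ha, mul_comm (Y a _)]
    exact hind.integrable_mul (ih fun i hi => hYi i (mem_insert_of_mem hi))
      (hYi a (mem_insert_self a s))

end ProbabilityTheory

section WeightedSecondMoment

variable {Ω : Type*} [MeasurableSpace Ω] {μ : Measure Ω} {ω : ℕ → Ω → ℝ} {h w : ℝ → ℝ}

lemma integral_mul_mul_prod_comp (hmeas : ∀ i, Measurable (ω i)) (hindep : iIndepFun ω μ)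
    (hident : ∀ i, IdentDistrib (ω i) (ω 0) μ μ) (hh : Measurable h) (hw : Measurable w)
    (hw_int : Integrable (fun x => w (ω 0 x)) μ)
    (hhw_int : Integrable (fun x => h (ω 0 x) * w (ω 0 x)) μ)
    (hhhw_int : Integrable (fun x => h (ω 0 x) ^ 2 * w (ω 0 x)) μ)
    (hcenter : ∫ x, h (ω 0 x) * w (ω 0 x) ∂μ = 0) {s : Finset ℕ} {i j : ℕ} (hi : i ∈ s)
    (hj : j ∈ s) :
    Integrable (fun x => h (ω i x) * h (ω j x) * ∏ k ∈ s, w (ω k x)) μ ∧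
      ∫ x, h (ω i x) * h (ω j x) * ∏ k ∈ s, w (ω k x) ∂μ =
        if i = j then (∫ x, h (ω 0 x) ^ 2 * w (ω 0 x) ∂μ) * (∫ x, w (ω 0 x) ∂μ) ^ (#s - 1)
        else 0 := by
  -- the integrand is `∏ k ∈ s, F k (ω k)`, so independence factorises its integral; for `i ≠ j`
  -- the factor at `k = i` is `E[h(ω 0) w(ω 0)] = 0`
  set F : ℕ → ℝ → ℝ := fun k u =>
    (if k = i then h u else 1) * (if k = j then h u else 1) * w u with hF
  have hF_meas (k : ℕ) : Measurable (F k) := by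
    refine Measurable.mul (Measurable.mul ?_ ?_) hw <;> split_ifs <;> fun_prop
  have hprod (x : Ω) :
      ∏ k ∈ s, F k (ω k x) = h (ω i x) * h (ω j x) * ∏ k ∈ s, w (ω k x) := by
    simp only [hF, prod_mul_distrib, prod_ite_eq' s, if_pos hi, if_pos hj]
  have hF_int (k : ℕ) : Integrable (fun x => F k (ω 0 x)) μ := by
    simp only [hF]
    split_ifs
    · simpa only [← sq] using hhhw_int
    · simpa using hhw_int
    · simpa using hhw_int
    · simpa using hw_int
  have hident_F (k : ℕ) : IdentDistrib (fun x => F k (ω k x)) (fun x => F k (ω 0 x)) μ μ :=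
    (hident k).comp (hF_meas k)
  have hindep_F : iIndepFun (fun k x => F k (ω k x)) μ := hindep.comp F hF_meas
  simp_rw [← hprod]
  refine ⟨hindep_F.integrable_finsetProd (fun k => (hF_meas k).comp (hmeas k))
    fun k _ => (hident_F k).integrable_iff.2 (hF_int k), ?_⟩
  rw [hindep_F.integral_finsetProd fun k => ((hF_meas k).comp (hmeas k)).aestronglyMeasurable]
  simp_rw [fun k => (hident_F k).integral_eq]
  split_ifs with hij
  · subst hij
    have hFi : ∫ x, F i (ω 0 x) ∂μ = ∫ x, h (ω 0 x) ^ 2 * w (ω 0 x) ∂μ := by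
      simp only [hF, if_true, ← sq]
    have hFk : ∀ k ∈ s.erase i, ∫ x, F k (ω 0 x) ∂μ = ∫ x, w (ω 0 x) ∂μ := fun k hk => by
      simp [hF, (mem_erase.1 hk).1]
    rw [← mul_prod_erase s _ hi, hFi, prod_congr rfl hFk, prod_const,
      card_erase_of_mem hi]
  · refine prod_eq_zero hi ?_
    simpa [hF, hij] using hcenter

lemma integral_sq_sum_mul_prod_comp (hmeas : ∀ i, Measurable (ω i)) (hindep : iIndepFun ω μ)
    (hident : ∀ i, IdentDistrib (ω i) (ω 0) μ μ) (hh : Measurable h) (hw : Measurable w)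
    (hw_int : Integrable (fun x => w (ω 0 x)) μ)
    (hhw_int : Integrable (fun x => h (ω 0 x) * w (ω 0 x)) μ)
    (hhhw_int : Integrable (fun x => h (ω 0 x) ^ 2 * w (ω 0 x)) μ)
    (hcenter : ∫ x, h (ω 0 x) * w (ω 0 x) ∂μ = 0) (s : Finset ℕ) :
    Integrable (fun x => (∑ i ∈ s, h (ω i x)) ^ 2 * ∏ k ∈ s, w (ω k x)) μ ∧
      ∫ x, (∑ i ∈ s, h (ω i x)) ^ 2 * ∏ k ∈ s, w (ω k x) ∂μ =
        #s * (∫ x, h (ω 0 x) ^ 2 * w (ω 0 x) ∂μ) * (∫ x, w (ω 0 x) ∂μ) ^ (#s - 1) := by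
  have hpair {i j : ℕ} (hi : i ∈ s) (hj : j ∈ s) :=
    integral_mul_mul_prod_comp hmeas hindep hident hh hw hw_int hhw_int hhhw_int hcenter hi hj
  have hexpand (x : Ω) : (∑ i ∈ s, h (ω i x)) ^ 2 * ∏ k ∈ s, w (ω k x) =
      ∑ i ∈ s, ∑ j ∈ s, h (ω i x) * h (ω j x) * ∏ k ∈ s, w (ω k x) := by
    rw [sq, sum_mul_sum, sum_mul]
    exact sum_congr rfl fun i _ => sum_mul _ _ _
  simp_rw [hexpand]
  refine ⟨integrable_finsetSum _ fun i hi => integrable_finsetSum _ fun j hj => (hpair hi hj).1,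
    ?_⟩
  rw [integral_finsetSum _ fun i hi => integrable_finsetSum _ fun j hj => (hpair hi hj).1]
  rw [sum_congr rfl fun i hi => by
    rw [integral_finsetSum _ fun j hj => (hpair hi hj).1,
      sum_congr rfl fun j hj => (hpair hi hj).2, sum_ite_eq s i, if_pos hi]]
  rw [sum_const, nsmul_eq_mul, mul_assoc]

end WeightedSecondMoment

section Tilting

variable {Ω : Type*} [MeasurableSpace Ω] {μ : Measure Ω} {X : Ω → ℝ} {t : ℝ}

noncomputable def tiltedMean (X : Ω → ℝ) (μ : Measure Ω) (t : ℝ) : ℝ :=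
  (∫ x, X x * exp (t * X x) ∂μ) / mgf X μ t

lemma integrable_pow_mul_exp_mul (hX : ∀ t, Integrable (fun x => exp (t * X x)) μ) (n : ℕ)
    (t : ℝ) : Integrable (fun x => X x ^ n * exp (t * X x)) μ :=
  integrable_pow_mul_exp_of_integrable_exp_mul one_ne_zero (hX _) (hX _) n

lemma integrable_of_forall_integrable_exp_mul
    (hX : ∀ t, Integrable (fun x => exp (t * X x)) μ) : Integrable X μ := by
  simpa using integrable_pow_mul_exp_mul hX 1 0

lemma integrable_mul_exp_mul (hX : ∀ t, Integrable (fun x => exp (t * X x)) μ) (t : ℝ) :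
    Integrable (fun x => X x * exp (t * X x)) μ := by
  simpa using integrable_pow_mul_exp_mul hX 1 t

lemma integrable_sq_mul_exp_abs (hX : ∀ t, Integrable (fun x => exp (t * X x)) μ) :
    Integrable (fun x => X x ^ 2 * exp |X x|) μ := by
  have := integrable_pow_abs_mul_exp_add_of_integrable_exp_mul (v := 0) (t := 2) (x := 1)
    (by simpa using hX 2) (by simpa using hX (-2)) zero_le_one (by norm_num) 2
  simpa only [sq_abs, zero_mul, zero_add, one_mul] using this

lemma one_le_mgf [IsProbabilityMeasure μ] (hXi : Integrable X μ) (hX0 : ∫ x, X x ∂μ = 0)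
    (ht : Integrable (fun x => exp (t * X x)) μ) : 1 ≤ mgf X μ t := by
  have h : ∫ x, (t * X x + 1) ∂μ ≤ mgf X μ t :=
    integral_mono ((hXi.const_mul t).add (integrable_const 1)) ht fun x => add_one_le_exp _
  rwa [integral_add (hXi.const_mul t) (integrable_const 1), integral_const_mul, hX0,
    integral_const, probReal_univ, mul_zero, zero_add, one_smul] at h

lemma abs_integral_mul_exp_mul_le (hX : ∀ t, Integrable (fun x => exp (t * X x)) μ)
    (hX0 : ∫ x, X x ∂μ = 0) (ht : |t| ≤ 1) :
    |∫ x, X x * exp (t * X x) ∂μ| ≤ |t| * ∫ x, X x ^ 2 * exp |X x| ∂μ := by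
  have hXi : Integrable X μ := integrable_of_forall_integrable_exp_mul hX
  have hdiff : Integrable (fun x => X x * (exp (t * X x) - 1)) μ :=
    ((integrable_mul_exp_mul hX t).sub hXi).congr <| ae_of_all _ fun x => by simp [mul_sub]
  have hsub_one : ∫ x, X x * exp (t * X x) ∂μ = ∫ x, X x * (exp (t * X x) - 1) ∂μ := by
    simp_rw [mul_sub, mul_one]
    rw [integral_sub (integrable_mul_exp_mul hX t) hXi, hX0, sub_zero]
  rw [hsub_one, ← integral_const_mul]
  exact (abs_integral_le_integral_abs).trans <| integral_mono hdiff.abs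
    ((integrable_sq_mul_exp_abs hX).const_mul _) fun x => abs_mul_exp_mul_sub_one_le ht (X x)

variable [IsProbabilityMeasure μ]

lemma tiltedMean_mul_mgf (hX : ∀ t, Integrable (fun x => exp (t * X x)) μ) :
    tiltedMean X μ t * mgf X μ t = ∫ x, X x * exp (t * X x) ∂μ :=
  div_mul_cancel₀ _ (mgf_pos (hX t)).ne'

lemma integral_sub_tiltedMean_mul_exp_mul (hX : ∀ t, Integrable (fun x => exp (t * X x)) μ) :
    ∫ x, (X x - tiltedMean X μ t) * exp (t * X x) ∂μ = 0 := by
  simp_rw [sub_mul]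
  rw [integral_sub (integrable_mul_exp_mul hX t) ((hX t).const_mul _),
    integral_const_mul, ← mgf, tiltedMean_mul_mgf hX, sub_self]

lemma integral_sub_tiltedMean_sq_mul_exp_mul_le
    (hX : ∀ t, Integrable (fun x => exp (t * X x)) μ) (ht : |t| ≤ 1) :
    ∫ x, (X x - tiltedMean X μ t) ^ 2 * exp (t * X x) ∂μ ≤ ∫ x, X x ^ 2 * exp |X x| ∂μ := by
  set m := tiltedMean X μ t
  have hXe := integrable_mul_exp_mul hX t
  have hexpand : ∫ x, (X x - m) ^ 2 * exp (t * X x) ∂μ =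
      ∫ x, X x ^ 2 * exp (t * X x) ∂μ - 2 * m * ∫ x, X x * exp (t * X x) ∂μ
        + m ^ 2 * mgf X μ t := by
    have hsplit (x : Ω) : (X x - m) ^ 2 * exp (t * X x) =
        X x ^ 2 * exp (t * X x) - 2 * m * (X x * exp (t * X x)) + m ^ 2 * exp (t * X x) := by
      ring
    simp_rw [hsplit]
    rw [integral_add ((integrable_pow_mul_exp_mul hX 2 t).sub' (hXe.const_mul _))
        ((hX t).const_mul _), integral_sub (integrable_pow_mul_exp_mul hX 2 t) (hXe.const_mul _),
      integral_const_mul, integral_const_mul, mgf]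
  have hmoment : ∫ x, X x ^ 2 * exp (t * X x) ∂μ ≤ ∫ x, X x ^ 2 * exp |X x| ∂μ :=
    integral_mono (integrable_pow_mul_exp_mul hX 2 t) (integrable_sq_mul_exp_abs hX) fun x =>
      mul_le_mul_of_nonneg_left (exp_mul_le_exp_abs ht _) (sq_nonneg _)
  rw [hexpand, ← tiltedMean_mul_mgf hX]
  nlinarith [mul_nonneg (sq_nonneg m) (mgf_nonneg (X := X) (μ := μ) (t := t))]

lemma abs_tiltedMean_le (hX : ∀ t, Integrable (fun x => exp (t * X x)) μ)
    (hX0 : ∫ x, X x ∂μ = 0) (ht : |t| ≤ 1) :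
    |tiltedMean X μ t| ≤ |t| * ∫ x, X x ^ 2 * exp |X x| ∂μ := by
  have hXi : Integrable X μ := integrable_of_forall_integrable_exp_mul hX
  rw [tiltedMean, abs_div, abs_of_pos (mgf_pos (hX t))]
  exact (div_le_self (abs_nonneg _) (one_le_mgf hXi hX0 (hX t))).trans
    (abs_integral_mul_exp_mul_le hX hX0 ht)

end Tilting

section TiltedSum

variable {Ω : Type*} [MeasurableSpace Ω] {μ : Measure Ω} [IsProbabilityMeasure μ]
  {ω : ℕ → Ω → ℝ} {t : ℝ}

lemma integral_sq_sum_sub_tiltedMean_mul_density_le (hmeas : ∀ i, Measurable (ω i))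
    (hindep : iIndepFun ω μ) (hident : ∀ i, IdentDistrib (ω i) (ω 0) μ μ)
    (hint : ∀ t, Integrable (fun x => exp (t * ω 0 x)) μ) (hcent : ∫ x, ω 0 x ∂μ = 0)
    (ht : |t| ≤ 1) (s : Finset ℕ) :
    Integrable (fun x => (∑ i ∈ s, (ω i x - tiltedMean (ω 0) μ t)) ^ 2 *
        (exp (t * ∑ i ∈ s, ω i x) / mgf (ω 0) μ t ^ #s)) μ ∧
      ∫ x, (∑ i ∈ s, (ω i x - tiltedMean (ω 0) μ t)) ^ 2 *
          (exp (t * ∑ i ∈ s, ω i x) / mgf (ω 0) μ t ^ #s) ∂μ ≤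
        #s * ∫ x, ω 0 x ^ 2 * exp |ω 0 x| ∂μ := by
  set m := tiltedMean (ω 0) μ t
  set M := mgf (ω 0) μ t
  have hM : 1 ≤ M := one_le_mgf (integrable_of_forall_integrable_exp_mul hint) hcent (hint t)
  have hprod (x : Ω) : exp (t * ∑ i ∈ s, ω i x) = ∏ i ∈ s, exp (t * ω i x) := by
    rw [mul_sum, exp_sum]
  obtain ⟨hint_sum, hintegral_sum⟩ := integral_sq_sum_mul_prod_comp (h := (· - m))
    (w := fun u => exp (t * u)) hmeas hindep hident (by fun_prop) (by fun_prop) (hint t)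
    (((integrable_mul_exp_mul hint t).sub' ((hint t).const_mul m)).congr
      (ae_of_all _ fun x => by simp only [sub_mul]))
    ((((integrable_pow_mul_exp_mul hint 2 t).sub'
      ((integrable_mul_exp_mul hint t).const_mul (2 * m))).add
        ((hint t).const_mul (m ^ 2))).congr
          (ae_of_all _ fun x => by simp only [Pi.add_apply]; ring))
    (integral_sub_tiltedMean_mul_exp_mul hint) s
  simp_rw [div_eq_mul_inv, ← mul_assoc, hprod]
  refine ⟨hint_sum.mul_const _, ?_⟩
  rw [integral_mul_const, hintegral_sum, show ∫ x, exp (t * ω 0 x) ∂μ = M from rfl]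
  have hV : ∫ x, (ω 0 x - m) ^ 2 * exp (t * ω 0 x) ∂μ ≤ ∫ x, ω 0 x ^ 2 * exp |ω 0 x| ∂μ :=
    integral_sub_tiltedMean_sq_mul_exp_mul_le hint ht
  have hV0 : 0 ≤ ∫ x, (ω 0 x - m) ^ 2 * exp (t * ω 0 x) ∂μ :=
    integral_nonneg fun x => by positivity
  have hpow : M ^ (#s - 1) * (M ^ #s)⁻¹ ≤ 1 := by
    rw [mul_inv_le_iff₀ (by positivity), one_mul]
    exact pow_le_pow_right₀ hM (Nat.sub_le _ _)
  calc _ = #s * (∫ x, (ω 0 x - m) ^ 2 * exp (t * ω 0 x) ∂μ) * (M ^ (#s - 1) * (M ^ #s)⁻¹) := by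
        ring
    _ ≤ #s * (∫ x, (ω 0 x - m) ^ 2 * exp (t * ω 0 x) ∂μ) * 1 := by gcongr
    _ ≤ #s * ∫ x, ω 0 x ^ 2 * exp |ω 0 x| ∂μ := by rw [mul_one]; gcongr

end TiltedSum

lemma withDensity_ge_le_integral_sq_mul_div_sq {Ω : Type*} [MeasurableSpace Ω]
    {μ : Measure Ω} {Z ρ : Ω → ℝ} (hZ : Measurable Z) (hρ : Measurable ρ) (hρ0 : ∀ x, 0 ≤ ρ x)
    (hZρ : Integrable (fun x => Z x ^ 2 * ρ x) μ) {ε : ℝ} (hε : 0 < ε) :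
    μ.withDensity (fun x => ENNReal.ofReal (ρ x)) {x | ε ≤ |Z x|} ≤
      ENNReal.ofReal ((∫ x, Z x ^ 2 * ρ x ∂μ) / ε ^ 2) := by
  have hsub : {x | ε ≤ |Z x|} ⊆ {x | ENNReal.ofReal (ε ^ 2) ≤ ENNReal.ofReal (Z x ^ 2)} :=
    fun x hx => ENNReal.ofReal_le_ofReal <| by
      simpa only [sq_abs] using pow_le_pow_left₀ hε.le hx 2
  have hmarkov := meas_ge_le_lintegral_div (μ := μ.withDensity fun x => ENNReal.ofReal (ρ x))
    (hZ.pow_const 2).ennreal_ofReal.aemeasurable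
    (by simpa only [ne_eq, ENNReal.ofReal_eq_zero, not_le] using pow_pos hε 2)
    ENNReal.ofReal_ne_top
  rw [lintegral_withDensity_eq_lintegral_mul _ hρ.ennreal_ofReal
    (hZ.pow_const 2).ennreal_ofReal] at hmarkov
  simp_rw [Pi.mul_apply, ← ENNReal.ofReal_mul (hρ0 _), mul_comm (ρ _)] at hmarkov
  rw [← ofReal_integral_eq_lintegral_ofReal hZρ (ae_of_all _ fun x => by
    have := hρ0 x; positivity), ← ENNReal.ofReal_div_of_pos (pow_pos hε 2)] at hmarkov
  exact (measure_mono hsub).trans hmarkov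

lemma le_abs_sub_of_exp_mul_lt_exp_neg {s c A a : ℝ} (hA : 1 ≤ A) (hc : |c| ≤ a / 2)
    (h : exp s * A < exp (-a)) : a / 2 ≤ |s - c| := by
  have hs : s < -a := exp_lt_exp.1 <| (le_mul_of_one_le_right (exp_pos s).le hA).trans_lt h
  rw [abs_sub_comm, abs_of_pos (by linarith [neg_abs_le c, abs_nonneg c])]
  linarith [neg_abs_le c]

lemma withDensity_exp_mul_sum_mul_mgf_pow_lt_le {Ω : Type*} [MeasurableSpace Ω]
    {μ : Measure Ω} [IsProbabilityMeasure μ] {ω : ℕ → Ω → ℝ} (hmeas : ∀ i, Measurable (ω i))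
    (hindep : iIndepFun ω μ) (hident : ∀ i, IdentDistrib (ω i) (ω 0) μ μ)
    (hint : ∀ t, Integrable (fun x => exp (t * ω 0 x)) μ) (hcent : ∫ x, ω 0 x ∂μ = 0)
    {lam a : ℝ} (hlam0 : 0 ≤ lam) (hlam1 : lam ≤ 1) (N : ℕ) (ha : 0 < a)
    (hsmall : lam ^ 2 * N * ∫ x, ω 0 x ^ 2 * exp |ω 0 x| ∂μ ≤ a / 2) :
    μ.withDensity (fun x => ENNReal.ofReal
        (exp (-lam * ∑ i ∈ range N, ω i x) / mgf (ω 0) μ (-lam) ^ N))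
      {x | exp (lam * ∑ i ∈ range N, ω i x) * mgf (ω 0) μ (-lam) ^ N < exp (-a)} ≤
    ENNReal.ofReal (4 * (lam ^ 2 * N * ∫ x, ω 0 x ^ 2 * exp |ω 0 x| ∂μ) / a ^ 2) := by
  set K := ∫ x, ω 0 x ^ 2 * exp |ω 0 x| ∂μ
  have hlam : |-lam| ≤ 1 := by rwa [abs_neg, abs_of_nonneg hlam0]
  obtain ⟨hZ_int, hZ_le⟩ := integral_sq_sum_sub_tiltedMean_mul_density_le hmeas hindep hident
    hint hcent hlam (range N)
  rw [card_range] at hZ_int hZ_le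
  set M := mgf (ω 0) μ (-lam)
  set m := tiltedMean (ω 0) μ (-lam)
  have hMN : 1 ≤ M ^ N := one_le_pow₀ <|
    one_le_mgf (integrable_of_forall_integrable_exp_mul hint) hcent (hint _)
  -- the tilted mean is `O(lam)`, so centring `lam * ∑ ω i` at it costs at most `a / 2`
  have hm : |lam * (N * m)| ≤ a / 2 := by
    rw [abs_mul, abs_mul, abs_of_nonneg hlam0, Nat.abs_cast]
    calc lam * (N * |m|) ≤ lam * (N * (|-lam| * K)) := by
          gcongr; exact abs_tiltedMean_le hint hcent hlam
      _ = lam ^ 2 * N * K := by rw [abs_neg, abs_of_nonneg hlam0]; ring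
      _ ≤ a / 2 := hsmall
  calc _ ≤ μ.withDensity (fun x => ENNReal.ofReal (exp (-lam * ∑ i ∈ range N, ω i x) / M ^ N))
        {x | a / 2 ≤ |lam * ∑ i ∈ range N, (ω i x - m)|} :=
        measure_mono fun x hx => by
          rw [Set.mem_ofPred_eq, sum_sub_distrib, sum_const, card_range, nsmul_eq_mul, mul_sub]
          exact le_abs_sub_of_exp_mul_lt_exp_neg hMN hm hx
    _ ≤ ENNReal.ofReal ((∫ x, (lam * ∑ i ∈ range N, (ω i x - m)) ^ 2 *
          (exp (-lam * ∑ i ∈ range N, ω i x) / M ^ N) ∂μ) / (a / 2) ^ 2) :=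
        withDensity_ge_le_integral_sq_mul_div_sq (by fun_prop) (by fun_prop)
          (fun x => div_nonneg (exp_pos _).le (zero_le_one.trans hMN))
          (by simpa only [mul_pow, mul_assoc] using hZ_int.const_mul (lam ^ 2)) (by positivity)
    _ ≤ ENNReal.ofReal (4 * (lam ^ 2 * N * K) / a ^ 2) := by
      refine ENNReal.ofReal_le_ofReal ?_
      rw [show ∀ y : ℝ, y / (a / 2) ^ 2 = 4 * y / a ^ 2 from fun y => by ring]
      simp_rw [mul_pow, mul_assoc, integral_const_mul]
      gcongr

theorem stmt19_general {Ω : Type*} [MeasurableSpace Ω] (μ : Measure Ω) [IsProbabilityMeasure μ]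
    (ω : ℕ → Ω → ℝ) (hmeas : ∀ i, Measurable (ω i))
    (hindep : iIndepFun ω μ)
    (hident : ∀ i, IdentDistrib (ω i) (ω 0) μ μ)
    (hcent : ∫ x, ω 0 x ∂μ = 0)
    (M : ℝ → ℝ) (hM : ∀ t, M t = ∫ x, Real.exp (t * ω 0 x) ∂μ)
    (hint : ∀ t : ℝ, Integrable (fun x => Real.exp (t * ω 0 x)) μ) :
    ∃ C : ℝ, 1 < C ∧ ∀ a ∈ Set.Ioo (0 : ℝ) 1, ∀ δ ∈ Set.Ioo (0 : ℝ) (a / C),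
      ∀ N : ℕ, 0 < N →
      (μ.withDensity (fun x => ENNReal.ofReal
          (Real.exp (-(δ / Real.sqrt N) * ∑ i ∈ Finset.range N, ω i x) /
            M (-(δ / Real.sqrt N)) ^ N)))
        {x | Real.exp ((δ / Real.sqrt N) * ∑ i ∈ Finset.range N, ω i x) *
              M (-(δ / Real.sqrt N)) ^ N < Real.exp (-a)} ≤
      ENNReal.ofReal (C * (δ / a) ^ 2) := by
  obtain rfl : M = mgf (ω 0) μ := funext hM
  set K := ∫ x, ω 0 x ^ 2 * exp |ω 0 x| ∂μ
  have hK : 0 ≤ K := integral_nonneg fun x => by positivity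
  refine ⟨4 * K + 2, by linarith, ?_⟩
  rintro a ⟨ha0, ha1⟩ δ ⟨hδ0, hδa⟩ N hN
  have hδ : δ * (4 * K + 2) < a := (lt_div_iff₀ (by positivity)).1 hδa
  have hδ1 : δ ≤ 1 := by nlinarith
  have hlam1 : δ / √N ≤ 1 := (div_le_self hδ0.le (one_le_sqrt.2 (by exact_mod_cast hN))).trans hδ1
  have hlamN : (δ / √N) ^ 2 * N = δ ^ 2 := by
    rw [div_pow, sq_sqrt (Nat.cast_nonneg N), div_mul_cancel₀ _ (by positivity)]
  refine (withDensity_exp_mul_sum_mul_mgf_pow_lt_le hmeas hindep hident hint hcent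
    (by positivity) hlam1 N ha0 ?_).trans (ENNReal.ofReal_le_ofReal ?_) <;> rw [hlamN]
  · nlinarith [mul_le_mul_of_nonneg_right hδ1 (mul_nonneg hδ0.le hK)]
  · rw [div_pow, ← mul_div_assoc]
    gcongr ?_ / _
    nlinarith

/-- Tilting estimate: with `ω_1, …, ω_N` IID centered, unit variance, with all exponential
moments finite, `M t = E[exp (t ω_1)]`, and the tilted law
`dP̃/dP = exp (-λ ∑_{i<N} ω_i)/M(-λ)^N` with `λ = δ/√N`, there exists `C > 1` such that
for `a ∈ (0,1)` and `δ ∈ (0, a/C)`: `P̃(dP/dP̃ < e^{-a}) ≤ C (δ/a)^2`. -/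
theorem stmt19 {Ω : Type*} [MeasurableSpace Ω] (μ : Measure Ω) [IsProbabilityMeasure μ]
    (ω : ℕ → Ω → ℝ) (hmeas : ∀ i, Measurable (ω i))
    (hindep : iIndepFun ω μ)
    (hident : ∀ i, IdentDistrib (ω i) (ω 0) μ μ)
    (hcent : ∫ x, ω 0 x ∂μ = 0)
    (hvar : ∫ x, (ω 0 x) ^ 2 ∂μ = 1)
    (M : ℝ → ℝ) (hM : ∀ t, M t = ∫ x, Real.exp (t * ω 0 x) ∂μ)
    (hint : ∀ t : ℝ, Integrable (fun x => Real.exp (t * ω 0 x)) μ) :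
    ∃ C : ℝ, 1 < C ∧ ∀ a ∈ Set.Ioo (0 : ℝ) 1, ∀ δ ∈ Set.Ioo (0 : ℝ) (a / C),
      ∀ N : ℕ, 0 < N →
      (μ.withDensity (fun x => ENNReal.ofReal
          (Real.exp (-(δ / Real.sqrt N) * ∑ i ∈ Finset.range N, ω i x) /
            M (-(δ / Real.sqrt N)) ^ N)))
        {x | Real.exp ((δ / Real.sqrt N) * ∑ i ∈ Finset.range N, ω i x) *
              M (-(δ / Real.sqrt N)) ^ N < Real.exp (-a)} ≤
      ENNReal.ofReal (C * (δ / a) ^ 2) :=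
  stmt19_general μ ω hmeas hindep hident hcent M hM hint
end
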